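/- arXiv:1409.6032 — 5 statements merged into one kernel-verified Lean document; each statement's English description precedes it below -/
import Mathlib

section
/- Let ‖·‖ be a cone linear absolute norm on R^d with respect to a proper cone K. Then the induced operator norm of any matrix M that leaves K invariant satisfies ‖M‖ = sup_{x ∈ K, x ≠ 0} ‖Mx‖/‖x‖. -/
open Matrix Set

/-- A proper cone: a nonempty-interior, closed, convex, pointed set closed under
nonnegative scalar multiplication. -/
def IsProperCone {d : ℕ} (K : Set (Fin d → ℝ)) : Prop :=
  (∀ x ∈ K, ∀ c : ℝ, 0 ≤ c → c • x ∈ K) ∧ IsClosed K ∧ Convex ℝ K ∧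
    (interior K).Nonempty ∧ ∀ x ∈ K, -x ∈ K → x = 0

/-- `M` leaves the cone `K` invariant: `M K ⊆ K`. -/
def LeavesInvariant {d : ℕ} (M : Matrix (Fin d) (Fin d) ℝ) (K : Set (Fin d → ℝ)) : Prop :=
  ∀ x ∈ K, M.mulVec x ∈ K

/-- `M` is `K`-positive: `M (K \ {0}) ⊆ interior K`. -/
def IsKPos {d : ℕ} (M : Matrix (Fin d) (Fin d) ℝ) (K : Set (Fin d → ℝ)) : Prop :=
  ∀ x ∈ K, x ≠ 0 → M.mulVec x ∈ interior K

/-- The dual cone `K* = {f | fᵀ x ≥ 0 for all x ∈ K}`. -/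
def dualConeSet {d : ℕ} (K : Set (Fin d → ℝ)) : Set (Fin d → ℝ) :=
  {f | ∀ x ∈ K, 0 ≤ f ⬝ᵥ x}

/-- The spectral radius of a real matrix: the supremum of the absolute values of its
(complex) eigenvalues. -/
noncomputable def specRad {d : ℕ} (M : Matrix (Fin d) (Fin d) ℝ) : ℝ :=
  sSup {r | ∃ z : ℂ, Module.End.HasEigenvalue (Matrix.toLin' (M.map Complex.ofReal)) z ∧
    r = ‖z‖}

/-- `nrm` is a norm on `Fin d → ℝ`. -/
def IsVecNorm {d : ℕ} (nrm : (Fin d → ℝ) → ℝ) : Prop :=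
  (∀ x, 0 ≤ nrm x) ∧ (∀ x, nrm x = 0 ↔ x = 0) ∧
    (∀ (c : ℝ) x, nrm (c • x) = |c| * nrm x) ∧ ∀ x y, nrm (x + y) ≤ nrm x + nrm y

/-- `nrm` is cone absolute with respect to `K`. -/
def IsConeAbsolute {d : ℕ} (K : Set (Fin d → ℝ)) (nrm : (Fin d → ℝ) → ℝ) : Prop :=
  ∀ x, nrm x = sInf {r | ∃ v ∈ K, ∃ w ∈ K, x = v - w ∧ r = nrm (v + w)}

/-- `nrm` is cone linear with respect to `K`. -/
def IsConeLinear {d : ℕ} (K : Set (Fin d → ℝ)) (nrm : (Fin d → ℝ) → ℝ) : Prop :=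
  ∃ f ∈ dualConeSet K, ∀ x ∈ K, nrm x = f ⬝ᵥ x

/-- A cone linear absolute norm with respect to `K`. -/
def IsCLANorm {d : ℕ} (K : Set (Fin d → ℝ)) (nrm : (Fin d → ℝ) → ℝ) : Prop :=
  IsVecNorm nrm ∧ IsConeAbsolute K nrm ∧ IsConeLinear K nrm

/-- The operator norm of a matrix induced by the vector norm `nrm`. -/
noncomputable def opNorm {d : ℕ} (nrm : (Fin d → ℝ) → ℝ) (M : Matrix (Fin d) (Fin d) ℝ) : ℝ :=
  sSup {r | ∃ x : Fin d → ℝ, x ≠ 0 ∧ r = nrm (M.mulVec x) / nrm x}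

/-- The cone linear absolute norm `‖·‖_f` induced by `f ∈ int K*`. -/
noncomputable def coneNorm {d : ℕ} (K : Set (Fin d → ℝ)) (f : Fin d → ℝ)
    (x : Fin d → ℝ) : ℝ :=
  sInf {r | ∃ v ∈ K, ∃ w ∈ K, x = v - w ∧ r = f ⬝ᵥ (v + w)}

/-
Write `x = v - w` with `v, w ∈ K`. As `M` maps `K` into itself, `Mx = Mv - Mw` is again a cone
decomposition, so cone absoluteness gives `‖Mx‖ ≤ ‖Mv + Mw‖ = ‖M(v + w)‖ ≤ c ‖v + w‖`, where
`c` is the supremum of `‖Mu‖ / ‖u‖` over `u ∈ K`. The infimum over all decompositions of `x`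
is `‖x‖`, hence `‖Mx‖ ≤ c ‖x‖`.
-/

lemma IsProperCone.add_mem {d : ℕ} {K : Set (Fin d → ℝ)} (hK : IsProperCone K)
    {v w : Fin d → ℝ} (hv : v ∈ K) (hw : w ∈ K) : v + w ∈ K := by
  obtain ⟨hsmul, -, hconv, -, -⟩ := hK
  have hmid : (2⁻¹ : ℝ) • v + (2⁻¹ : ℝ) • w ∈ K :=
    hconv hv hw (by norm_num) (by norm_num) (by norm_num)
  convert hsmul _ hmid 2 (by norm_num) using 1
  simp [smul_add, smul_smul]

lemma IsConeAbsolute.apply_sub_le_apply_add {d : ℕ} {K : Set (Fin d → ℝ)}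
    {nrm : (Fin d → ℝ) → ℝ} (habs : IsConeAbsolute K nrm) (hnn : ∀ x, 0 ≤ nrm x)
    {v w : Fin d → ℝ} (hv : v ∈ K) (hw : w ∈ K) : nrm (v - w) ≤ nrm (v + w) := by
  rw [habs (v - w)]
  exact csInf_le ⟨0, by rintro _ ⟨_, -, _, -, -, rfl⟩; exact hnn _⟩ ⟨v, hv, w, hw, rfl, rfl⟩

lemma IsConeAbsolute.apply_mulVec_le_of_forall_mem {d : ℕ} {K : Set (Fin d → ℝ)}
    {nrm : (Fin d → ℝ) → ℝ} (habs : IsConeAbsolute K nrm) (hnn : ∀ x, 0 ≤ nrm x)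
    (hzero : ∀ x, nrm x = 0 ↔ x = 0) (hK : ∀ v ∈ K, ∀ w ∈ K, v + w ∈ K)
    {M : Matrix (Fin d) (Fin d) ℝ} (hM : LeavesInvariant M K) {c : ℝ} (hc : 0 ≤ c)
    (hbound : ∀ u ∈ K, nrm (M *ᵥ u) ≤ c * nrm u) (x : Fin d → ℝ) :
    nrm (M *ᵥ x) ≤ c * nrm x := by
  rcases eq_or_ne x 0 with rfl | hx
  · simp [(hzero 0).2 rfl]
  have hdecomp : {r | ∃ v ∈ K, ∃ w ∈ K, x = v - w ∧ r = nrm (v + w)}.Nonempty := by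
    by_contra hempty
    rw [not_nonempty_iff_eq_empty] at hempty
    exact hx ((hzero x).1 (by rw [habs x, hempty, Real.sInf_empty]))
  rw [habs x, ← smul_eq_mul, ← Real.sInf_smul_of_nonneg hc]
  refine le_csInf hdecomp.smul_set ?_
  rintro _ ⟨_, ⟨v, hv, w, hw, rfl, rfl⟩, rfl⟩
  calc nrm (M *ᵥ (v - w)) = nrm (M *ᵥ v - M *ᵥ w) := by rw [mulVec_sub]
    _ ≤ nrm (M *ᵥ v + M *ᵥ w) := habs.apply_sub_le_apply_add hnn (hM v hv) (hM w hw)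
    _ = nrm (M *ᵥ (v + w)) := by rw [mulVec_add]
    _ ≤ c * nrm (v + w) := hbound _ (hK v hv w hw)

lemma Real.sSup_eq_sSup_of_subset {S T : Set ℝ} (hTS : T ⊆ S) (hS : ∀ r ∈ S, 0 ≤ r)
    (hle : BddAbove T → ∀ r ∈ S, r ≤ sSup T) : sSup S = sSup T := by
  by_cases hT : BddAbove T
  · have hSbdd : BddAbove S := ⟨_, hle hT⟩
    exact le_antisymm (Real.sSup_le (hle hT) (Real.sSup_nonneg fun r hr ↦ hS r (hTS hr)))
      (Real.sSup_le (fun r hr ↦ le_csSup hSbdd (hTS hr)) (Real.sSup_nonneg hS))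
  · rw [Real.sSup_of_not_bddAbove hT,
      Real.sSup_of_not_bddAbove fun hS ↦ hT (hS.mono hTS)]

/-- For a cone linear absolute norm w.r.t. a proper cone `K`, the induced
operator norm of any matrix leaving `K` invariant is attained over `K`. -/
theorem stmt_2 {d : ℕ} (K : Set (Fin d → ℝ)) (hK : IsProperCone K)
    (nrm : (Fin d → ℝ) → ℝ) (hnrm : IsCLANorm K nrm)
    (M : Matrix (Fin d) (Fin d) ℝ) (hM : LeavesInvariant M K) :
    opNorm nrm M = sSup {r | ∃ x ∈ K, x ≠ 0 ∧ r = nrm (M.mulVec x) / nrm x} := by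
  obtain ⟨⟨hnn, hzero, -, -⟩, habs, -⟩ := hnrm
  have hratio_nonneg (x : Fin d → ℝ) : 0 ≤ nrm (M *ᵥ x) / nrm x := div_nonneg (hnn _) (hnn _)
  refine Real.sSup_eq_sSup_of_subset (fun r ⟨x, _, hx, hr⟩ ↦ ⟨x, hx, hr⟩)
    (fun r ⟨x, _, hr⟩ ↦ hr ▸ hratio_nonneg x) fun hT ↦ ?_
  set c := sSup {r | ∃ x ∈ K, x ≠ 0 ∧ r = nrm (M.mulVec x) / nrm x}
  have hc : 0 ≤ c := Real.sSup_nonneg fun r ⟨x, _, _, hr⟩ ↦ hr ▸ hratio_nonneg x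
  have hcone : ∀ u ∈ K, nrm (M *ᵥ u) ≤ c * nrm u := by
    intro u hu
    rcases eq_or_ne u 0 with rfl | hu0
    · simp [(hzero 0).2 rfl]
    have hu_pos : 0 < nrm u := (hnn u).lt_of_ne' fun h ↦ hu0 ((hzero u).1 h)
    exact (div_le_iff₀ hu_pos).1 (le_csSup hT ⟨u, hu, hu0, rfl⟩)
  rintro _ ⟨x, -, rfl⟩
  exact div_le_of_le_mul₀ (hnn x) hc <| habs.apply_mulVec_le_of_forall_mem hnn hzero
    (fun _ hv _ hw ↦ hK.add_mem hv hw) hM hc hcone x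
end

section
/- Let ‖·‖ be a cone linear absolute norm with respect to a proper cone K. If M ≥^K N ≥^K 0 (i.e., M - N and N both leave K invariant), then the induced operator norms satisfy ‖M‖ ≥ ‖N‖. -/
open Matrix Set

/-!
Write `x = v - w` with `v, w ∈ K`. Cone absoluteness gives `‖N x‖ ≤ ‖N v + N w‖ = ‖N (v + w)‖`.
On `K` the norm is a linear functional `f ∈ K*`, hence monotone for `≥^K`, and `M ≥^K N` on
`v + w ∈ K` yields `‖N (v + w)‖ ≤ ‖M (v + w)‖ ≤ ‖M‖ ‖v + w‖`. Taking the infimum over all such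
decompositions, which is `‖x‖` by cone absoluteness, gives `‖N x‖ ≤ ‖M‖ ‖x‖`.
-/

variable {d : ℕ}

namespace IsVecNorm

variable {nrm : (Fin d → ℝ) → ℝ}

lemma map_zero (h : IsVecNorm nrm) : nrm 0 = 0 := (h.2.1 0).mpr rfl

lemma pos (h : IsVecNorm nrm) {x : Fin d → ℝ} (hx : x ≠ 0) : 0 < nrm x :=
  (h.1 x).lt_of_ne fun e => hx ((h.2.1 x).mp e.symm)

lemma convexOn (h : IsVecNorm nrm) : ConvexOn ℝ univ nrm := by
  refine ⟨convex_univ, fun x _ y _ a b ha hb _ => ?_⟩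
  calc nrm (a • x + b • y) ≤ nrm (a • x) + nrm (b • y) := h.2.2.2 _ _
    _ = a • nrm x + b • nrm y := by
      rw [h.2.2.1, h.2.2.1, abs_of_nonneg ha, abs_of_nonneg hb, smul_eq_mul, smul_eq_mul]

lemma continuous (h : IsVecNorm nrm) : Continuous nrm :=
  continuousOn_univ.mp (h.convexOn.continuousOn isOpen_univ)

lemma div_smul_eq (h : IsVecNorm nrm) (M : Matrix (Fin d) (Fin d) ℝ) {t : ℝ} (ht : t ≠ 0)
    (x : Fin d → ℝ) :
    nrm (M *ᵥ (t • x)) / nrm (t • x) = nrm (M *ᵥ x) / nrm x := by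
  rw [mulVec_smul, h.2.2.1, h.2.2.1, mul_div_mul_left _ _ (abs_ne_zero.mpr ht)]

lemma bddAbove_div (h : IsVecNorm nrm) (M : Matrix (Fin d) (Fin d) ℝ) :
    BddAbove {r | ∃ x : Fin d → ℝ, x ≠ 0 ∧ r = nrm (M *ᵥ x) / nrm x} := by
  have hsphere : ∀ x ∈ Metric.sphere (0 : Fin d → ℝ) 1, nrm x ≠ 0 := fun x hx =>
    (h.pos (ne_zero_of_mem_unit_sphere ⟨x, hx⟩)).ne'
  have hcont : ContinuousOn (fun x => nrm (M *ᵥ x) / nrm x) (Metric.sphere 0 1) :=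
    (h.continuous.comp (Continuous.matrix_mulVec continuous_const continuous_id)).continuousOn.div
      h.continuous.continuousOn hsphere
  -- the ratio is scale invariant, so every value is attained on the compact unit sphere
  refine ((isCompact_sphere 0 1).bddAbove_image hcont).mono ?_
  rintro _ ⟨x, hx, rfl⟩
  refine ⟨‖x‖⁻¹ • x, ?_, h.div_smul_eq M (inv_ne_zero (norm_ne_zero_iff.mpr hx)) x⟩
  simp [norm_smul, inv_mul_cancel₀ (norm_ne_zero_iff.mpr hx)]

lemma le_opNorm_mul (h : IsVecNorm nrm) (M : Matrix (Fin d) (Fin d) ℝ) (x : Fin d → ℝ) :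
    nrm (M *ᵥ x) ≤ opNorm nrm M * nrm x := by
  rcases eq_or_ne x 0 with rfl | hx
  · simp [h.map_zero]
  · exact (div_le_iff₀ (h.pos hx)).mp (le_csSup (h.bddAbove_div M) ⟨x, hx, rfl⟩)

end IsVecNorm

lemma opNorm_nonneg {nrm : (Fin d → ℝ) → ℝ} (hnn : ∀ x, 0 ≤ nrm x)
    (M : Matrix (Fin d) (Fin d) ℝ) :
    0 ≤ opNorm nrm M :=
  Real.sSup_nonneg fun _ ⟨_, _, hr⟩ => hr ▸ div_nonneg (hnn _) (hnn _)

lemma opNorm_le {nrm : (Fin d → ℝ) → ℝ} (h : IsVecNorm nrm) {N : Matrix (Fin d) (Fin d) ℝ}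
    {c : ℝ} (hc : 0 ≤ c) (hN : ∀ x, nrm (N *ᵥ x) ≤ c * nrm x) : opNorm nrm N ≤ c := by
  refine Real.sSup_le ?_ hc
  rintro _ ⟨x, hx, rfl⟩
  exact (div_le_iff₀ (h.pos hx)).mpr (hN x)

namespace IsProperCone

variable {K : Set (Fin d → ℝ)}

lemma add_mem_s3 (hK : IsProperCone K) {v w : Fin d → ℝ} (hv : v ∈ K) (hw : w ∈ K) :
    v + w ∈ K := by
  have hmid : (2 : ℝ)⁻¹ • v + (2 : ℝ)⁻¹ • w ∈ K :=
    hK.2.2.1 hv hw (by norm_num) (by norm_num) (by norm_num)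
  simpa [← smul_add, smul_smul] using hK.1 _ hmid 2 zero_le_two

lemma exists_sub_eq (hK : IsProperCone K) (x : Fin d → ℝ) :
    ∃ v ∈ K, ∃ w ∈ K, x = v - w := by
  obtain ⟨u, hu⟩ := hK.2.2.2.1
  have hlim : Filter.Tendsto (fun t : ℝ => u + t • x) (nhdsWithin 0 (Ioi 0)) (nhds u) := by
    exact tendsto_nhdsWithin_of_tendsto_nhds
      ((continuous_const.add (continuous_id.smul continuous_const)).tendsto' 0 u (by simp))
  obtain ⟨t, ht, htpos⟩ :=
    ((hlim.eventually (mem_interior_iff_mem_nhds.mp hu)).and self_mem_nhdsWithin).exists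
  -- `x = t⁻¹ • (u + t • x) - t⁻¹ • u`, with `u` interior and `t > 0` small
  refine ⟨t⁻¹ • (u + t • x), hK.1 _ ht _ (inv_nonneg.mpr (htpos.le)),
    t⁻¹ • u, hK.1 _ (interior_subset hu) _ (inv_nonneg.mpr (htpos.le)), ?_⟩
  rw [← smul_sub, add_sub_cancel_left, smul_smul, inv_mul_cancel₀ (htpos.ne'), one_smul]

end IsProperCone

lemma LeavesInvariant.of_sub {K : Set (Fin d → ℝ)} (hK : IsProperCone K)
    {M N : Matrix (Fin d) (Fin d) ℝ} (hMN : LeavesInvariant (M - N) K)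
    (hN : LeavesInvariant N K) : LeavesInvariant M K := fun x hx => by
  simpa [sub_mulVec] using hK.add_mem_s3 (hMN x hx) (hN x hx)

namespace IsConeAbsolute

variable {K : Set (Fin d → ℝ)} {nrm : (Fin d → ℝ) → ℝ}

lemma le_add (hCA : IsConeAbsolute K nrm) (hnn : ∀ x, 0 ≤ nrm x) {v w : Fin d → ℝ}
    (hv : v ∈ K) (hw : w ∈ K) : nrm (v - w) ≤ nrm (v + w) := by
  rw [hCA (v - w)]
  refine csInf_le ⟨0, ?_⟩ ⟨v, hv, w, hw, rfl, rfl⟩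
  rintro _ ⟨_, _, _, _, _, rfl⟩
  exact hnn _

lemma le_mul_of_forall_sub_eq (hCA : IsConeAbsolute K nrm) {x : Fin d → ℝ}
    (hx : ∃ v ∈ K, ∃ w ∈ K, x = v - w) {a c : ℝ} (hc : 0 ≤ c)
    (h : ∀ v ∈ K, ∀ w ∈ K, x = v - w → a ≤ c * nrm (v + w)) : a ≤ c * nrm x := by
  rw [hCA x, ← smul_eq_mul, ← Real.sInf_smul_of_nonneg hc]
  obtain ⟨v, hv, w, hw, hvw⟩ := hx
  refine le_csInf ⟨_, Set.smul_mem_smul_set ⟨v, hv, w, hw, hvw, rfl⟩⟩ ?_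
  rintro _ ⟨_, ⟨v, hv, w, hw, hvw, rfl⟩, rfl⟩
  exact h v hv w hw hvw

end IsConeAbsolute

lemma IsConeLinear.mono {K : Set (Fin d → ℝ)} {nrm : (Fin d → ℝ) → ℝ}
    (hCL : IsConeLinear K nrm) {x y : Fin d → ℝ} (hx : x ∈ K) (hy : y ∈ K)
    (hxy : y - x ∈ K) :
    nrm x ≤ nrm y := by
  obtain ⟨f, hf, hnrm⟩ := hCL
  have := hf _ hxy
  rw [dotProduct_sub] at this
  rw [hnrm x hx, hnrm y hy]
  linarith

lemma IsCLANorm.le_opNorm_mul_of_le {K : Set (Fin d → ℝ)} (hK : IsProperCone K)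
    {nrm : (Fin d → ℝ) → ℝ} (hnrm : IsCLANorm K nrm) {M N : Matrix (Fin d) (Fin d) ℝ}
    (hMN : LeavesInvariant (M - N) K) (hN : LeavesInvariant N K) (x : Fin d → ℝ) :
    nrm (N *ᵥ x) ≤ opNorm nrm M * nrm x := by
  obtain ⟨hV, hCA, hCL⟩ := hnrm
  refine hCA.le_mul_of_forall_sub_eq (hK.exists_sub_eq x) (opNorm_nonneg hV.1 M)
    fun v hv w hw hvw => ?_
  have hz := hK.add_mem_s3 hv hw
  have hMNz : M *ᵥ (v + w) - N *ᵥ (v + w) ∈ K := by simpa [sub_mulVec] using hMN _ hz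
  calc nrm (N *ᵥ x) = nrm (N *ᵥ v - N *ᵥ w) := by rw [hvw, mulVec_sub]
    _ ≤ nrm (N *ᵥ v + N *ᵥ w) := hCA.le_add hV.1 (hN v hv) (hN w hw)
    _ = nrm (N *ᵥ (v + w)) := by rw [mulVec_add]
    _ ≤ nrm (M *ᵥ (v + w)) :=
      hCL.mono (hN _ hz) (LeavesInvariant.of_sub hK hMN hN _ hz) hMNz
    _ ≤ opNorm nrm M * nrm (v + w) := hV.le_opNorm_mul M _

/-- If `M ≥^K N ≥^K 0` then `‖M‖ ≥ ‖N‖` in the operator norm induced by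
a cone linear absolute norm w.r.t. the proper cone `K`. -/
theorem stmt_3 {d : ℕ} (K : Set (Fin d → ℝ)) (hK : IsProperCone K)
    (nrm : (Fin d → ℝ) → ℝ) (hnrm : IsCLANorm K nrm)
    (M N : Matrix (Fin d) (Fin d) ℝ)
    (hMN : LeavesInvariant (M - N) K) (hN : LeavesInvariant N K) :
    opNorm nrm N ≤ opNorm nrm M :=
  opNorm_le hnrm.1 (opNorm_nonneg hnrm.1.1 M) (hnrm.le_opNorm_mul_of_le hK hMN hN)
end

section
/- Let K ⊂ R^d be a proper cone and let M be K-positive. Then there exists f in the interior of the dual cone K* such that f is an eigenvector of Mᵀ with eigenvalue ρ(M), and the cone linear absolute norm ‖·‖_f induced by f satisfies ‖M‖_f = ρ(M) for the induced operator norm. -/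
open Matrix Set

/-!
`Mᵀ` maps `K* \ {0}` into `int K*`. Maximising `t` over the compact set of pairs `(t, g)` with
`g ∈ K*`, `‖g‖ = 1` and `Mᵀ g - t g ∈ K*` therefore gives a Perron eigenvector: at a maximiser
that is not an eigenpair, applying `Mᵀ` to `Mᵀ g - t g ≠ 0` lands in `int K*` and allows a larger
`t`. This yields `Mᵀ f = r f` with `r > 0` and `f ∈ int K*`.

Since `f` is strictly positive on `K \ {0}`, `‖·‖_f` is a norm, and `Mᵀ f = r f` turns a
decomposition `x = v - w` into the decomposition `M x = M v - M w` of cost `r fᵀ(v + w)`, so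
`‖M x‖_f ≤ r ‖x‖_f`, with equality on `K`. Thus `‖M‖_f = r`. Finally `r` is an eigenvalue of `M`
(`M` and `Mᵀ` share their characteristic polynomial), and it dominates every complex eigenvalue
`z`: for an eigenvector `u`, `g c = ‖Re (c u)‖_f` is positively homogeneous with
`g (c z) ≤ r g c`, so rotating by the phase of `z` shows `|z| · sup g ≤ r · sup g` over the unit
circle. Hence `ρ(M) = r`.
-/

open Filter Topology Metric

section Cone

variable {E : Type*} [AddCommGroup E] [Module ℝ E]

theorem add_mem_of_convex_of_smul_mem {K : Set E} (hKconv : Convex ℝ K)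
    (hKsmul : ∀ x ∈ K, ∀ c : ℝ, 0 ≤ c → c • x ∈ K) {x y : E} (hx : x ∈ K) (hy : y ∈ K) :
    x + y ∈ K := by
  have hmid := hKconv hx hy (by norm_num : (0 : ℝ) ≤ 1 / 2) (by norm_num : (0 : ℝ) ≤ 1 / 2)
    (by norm_num)
  simpa [smul_add, smul_smul] using hKsmul _ hmid 2 (by norm_num)

end Cone

section TopologicalVectorSpace

variable {E : Type*} [AddCommGroup E] [Module ℝ E] [TopologicalSpace E] [ContinuousAdd E]
  [ContinuousSMul ℝ E]

theorem exists_pos_add_smul_mem_of_mem_interior {U : Set E} {a : E} (ha : a ∈ interior U)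
    (v : E) : ∃ t : ℝ, 0 < t ∧ a + t • v ∈ U := by
  have hlim : Tendsto (fun t : ℝ => a + t • v) (𝓝[>] 0) (𝓝 a) := by
    have hcont : Continuous fun t : ℝ => a + t • v := by fun_prop
    simpa using (hcont.tendsto 0).mono_left nhdsWithin_le_nhds
  obtain ⟨t, hU, ht⟩ :=
    ((hlim.eventually (mem_interior_iff_mem_nhds.1 ha)).and self_mem_nhdsWithin).exists
  exact ⟨t, ht, hU⟩

theorem exists_mem_ne_zero_of_interior_nonempty [Nontrivial E] {U : Set E}
    (hU : (interior U).Nonempty) : ∃ x ∈ U, x ≠ 0 := by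
  obtain ⟨e, he⟩ := hU
  obtain ⟨v, hv⟩ := exists_ne (0 : E)
  obtain ⟨t, ht, hmem⟩ := exists_pos_add_smul_mem_of_mem_interior he v
  by_cases he0 : e = 0
  · subst he0
    exact ⟨_, hmem, by simpa using smul_ne_zero ht.ne' hv⟩
  · exact ⟨e, interior_subset he, he0⟩

theorem exists_sub_eq_of_interior_nonempty {K : Set E}
    (hKsmul : ∀ x ∈ K, ∀ c : ℝ, 0 ≤ c → c • x ∈ K) (hK : (interior K).Nonempty) (x : E) :
    ∃ v ∈ K, ∃ w ∈ K, x = v - w := by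
  obtain ⟨e, he⟩ := hK
  obtain ⟨t, ht, hmem⟩ := exists_pos_add_smul_mem_of_mem_interior he x
  refine ⟨t⁻¹ • (e + t • x), hKsmul _ hmem _ (by positivity),
    t⁻¹ • e, hKsmul _ (interior_subset he) _ (by positivity), ?_⟩
  rw [← smul_sub, add_sub_cancel_left, smul_smul, inv_mul_cancel₀ ht.ne', one_smul]

end TopologicalVectorSpace

section Normed

variable {E : Type*} [NormedAddCommGroup E] [NormedSpace ℝ E] {C : Set E}

theorem inv_norm_smul_mem_inter_sphere (hCsmul : ∀ x ∈ C, ∀ c : ℝ, 0 ≤ c → c • x ∈ C)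
    {x : E} (hx : x ∈ C) (hx0 : x ≠ 0) : ‖x‖⁻¹ • x ∈ C ∩ sphere 0 1 :=
  ⟨hCsmul x hx _ (by positivity), by
    rw [mem_sphere_zero_iff_norm, norm_smul, norm_inv, norm_norm,
      inv_mul_cancel₀ (norm_ne_zero_iff.2 hx0)]⟩

end Normed

section FiniteDimensional

variable {E : Type*} [NormedAddCommGroup E] [NormedSpace ℝ E] [FiniteDimensional ℝ E]
  {C : Set E}

theorem exists_pos_mul_norm_le_of_pos (hCcl : IsClosed C)
    (hCsmul : ∀ x ∈ C, ∀ c : ℝ, 0 ≤ c → c • x ∈ C) {φ : E →ₗ[ℝ] ℝ}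
    (hφ : ∀ x ∈ C, x ≠ 0 → 0 < φ x) : ∃ δ > 0, ∀ x ∈ C, δ * ‖x‖ ≤ φ x := by
  obtain ⟨δ, hδ, hmin⟩ := ((isCompact_sphere (0 : E) 1).inter_left hCcl).exists_forall_le'
    φ.continuous_of_finiteDimensional.continuousOn
    fun x hx => hφ x hx.1 (ne_zero_of_mem_unit_sphere ⟨x, hx.2⟩)
  refine ⟨δ, hδ, fun x hx => ?_⟩
  rcases eq_or_ne x 0 with rfl | hx0
  · simp
  have h := hmin _ (inv_norm_smul_mem_inter_sphere hCsmul hx hx0)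
  rwa [map_smul, smul_eq_mul, le_inv_mul_iff₀ (norm_pos_iff.2 hx0), mul_comm] at h

end FiniteDimensional

namespace Perron

variable {E : Type*} [NormedAddCommGroup E] [NormedSpace ℝ E] {C : Set E} {A : E →ₗ[ℝ] E}

def subeigenPairs (C : Set E) (A : E →ₗ[ℝ] E) : Set (ℝ × E) :=
  {p | 0 ≤ p.1 ∧ p.2 ∈ C ∩ sphere 0 1 ∧ A p.2 - p.1 • p.2 ∈ C}

theorem isCompact_subeigenPairs [FiniteDimensional ℝ E] (hCcl : IsClosed C)
    (hCsmul : ∀ x ∈ C, ∀ c : ℝ, 0 ≤ c → c • x ∈ C) {φ : E →ₗ[ℝ] ℝ}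
    (hφ : ∀ x ∈ C, x ≠ 0 → 0 < φ x) : IsCompact (subeigenPairs C A) := by
  have hS : IsCompact (C ∩ sphere (0 : E) 1) := (isCompact_sphere 0 1).inter_left hCcl
  have hAc := A.continuous_of_finiteDimensional
  have hφc := φ.continuous_of_finiteDimensional
  obtain ⟨δ, hδ, hφδ⟩ := exists_pos_mul_norm_le_of_pos hCcl hCsmul hφ
  obtain ⟨B, hB⟩ := (hS.image (hφc.comp hAc)).isBounded.bddAbove
  have hclosed : IsClosed (subeigenPairs C A) :=
    (isClosed_le continuous_const continuous_fst).inter <|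
      ((hCcl.inter isClosed_sphere).preimage continuous_snd).inter <|
        hCcl.preimage ((hAc.comp continuous_snd).sub (continuous_fst.smul continuous_snd))
  refine isCompact_of_isClosed_isBounded hclosed
    (((isBounded_Icc 0 (B / δ)).prod hS.isBounded).subset ?_)
  rintro ⟨t, x⟩ ⟨ht, hx, hAx⟩
  refine ⟨⟨ht, ?_⟩, hx⟩
  have hφx : δ ≤ φ x := by simpa [mem_sphere_zero_iff_norm.1 hx.2] using hφδ x hx.1
  have hsub : 0 ≤ φ (A x - t • x) := by
    rcases eq_or_ne (A x - t • x) 0 with h | h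
    · simp [h]
    · exact (hφ _ hAx h).le
  rw [map_sub, map_smul, smul_eq_mul, sub_nonneg] at hsub
  rw [le_div_iff₀ hδ]
  calc t * δ ≤ t * φ x := mul_le_mul_of_nonneg_left hφx ht
    _ ≤ φ (A x) := hsub
    _ ≤ B := hB ⟨x, hx, rfl⟩

theorem exists_gt_mem_subeigenPairs (hCsmul : ∀ x ∈ C, ∀ c : ℝ, 0 ≤ c → c • x ∈ C)
    {s : ℝ} (hs : 0 ≤ s) {y : E} (hy : y ∈ C) (hy0 : y ≠ 0)
    (hAy : A y - s • y ∈ interior C) : ∃ t > s, (t, ‖y‖⁻¹ • y) ∈ subeigenPairs C A := by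
  obtain ⟨ε, hε, hmem⟩ := exists_pos_add_smul_mem_of_mem_interior hAy (-y)
  refine ⟨s + ε, by linarith, by positivity, inv_norm_smul_mem_inter_sphere hCsmul hy hy0, ?_⟩
  have h : A (‖y‖⁻¹ • y) - (s + ε) • ‖y‖⁻¹ • y = ‖y‖⁻¹ • (A y - s • y + ε • -y) := by
    rw [map_smul, smul_comm (s + ε), ← smul_sub, add_smul, smul_neg]
    congr 1
    abel
  rw [h]
  exact hCsmul _ hmem _ (by positivity)

theorem apply_eq_smul_of_isMaxOn (hCsmul : ∀ x ∈ C, ∀ c : ℝ, 0 ≤ c → c • x ∈ C)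
    {φ : E →ₗ[ℝ] ℝ} (hφ : ∀ x ∈ C, x ≠ 0 → 0 < φ x) (hA : ∀ x ∈ C, x ≠ 0 → A x ∈ interior C)
    {r : ℝ} {x : E} (hp : (r, x) ∈ subeigenPairs C A)
    (hmax : IsMaxOn Prod.fst (subeigenPairs C A) (r, x)) (hr : 0 < r) : A x = r • x := by
  obtain ⟨-, ⟨hxC, hx1⟩, hc⟩ := hp
  have hx0 : x ≠ 0 := ne_zero_of_mem_unit_sphere ⟨x, hx1⟩
  by_contra hne
  have hc0 : A x - r • x ≠ 0 := sub_ne_zero.2 hne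
  have hAx0 : A x ≠ 0 := by
    intro h
    have := hφ _ hc hc0
    rw [h, zero_sub, map_neg, map_smul, smul_eq_mul] at this
    nlinarith [hφ x hxC hx0]
  have hAAx : A (A x) - r • A x ∈ interior C := by
    simpa [map_sub, map_smul] using hA _ hc hc0
  obtain ⟨t, hrt, ht⟩ :=
    exists_gt_mem_subeigenPairs hCsmul hr.le (interior_subset (hA x hxC hx0)) hAx0 hAAx
  exact (hmax ht).not_gt hrt

end Perron

open Perron in
theorem exists_eigenvector_mem_interior_of_pos {E : Type*} [NormedAddCommGroup E]
    [NormedSpace ℝ E] [FiniteDimensional ℝ E] {C : Set E} (hCcl : IsClosed C)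
    (hCsmul : ∀ x ∈ C, ∀ c : ℝ, 0 ≤ c → c • x ∈ C) {φ : E →ₗ[ℝ] ℝ}
    (hφ : ∀ x ∈ C, x ≠ 0 → 0 < φ x) {x₀ : E} (hx₀ : x₀ ∈ C) (hx₀0 : x₀ ≠ 0)
    {A : E →ₗ[ℝ] E} (hA : ∀ x ∈ C, x ≠ 0 → A x ∈ interior C) :
    ∃ r : ℝ, 0 < r ∧ ∃ x ∈ interior C, x ≠ 0 ∧ A x = r • x := by
  obtain ⟨t, ht, hp⟩ :=
    exists_gt_mem_subeigenPairs hCsmul le_rfl hx₀ hx₀0 (by simpa using hA x₀ hx₀ hx₀0)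
  obtain ⟨⟨r, x⟩, hmem, hmax⟩ := (isCompact_subeigenPairs (A := A) hCcl hCsmul hφ).exists_isMaxOn
    ⟨_, hp⟩ continuous_fst.continuousOn
  have hr : 0 < r := ht.trans_le (hmax hp)
  have heig := apply_eq_smul_of_isMaxOn hCsmul hφ hA hmem hmax hr
  obtain ⟨-, ⟨hxC, hx1⟩, -⟩ := hmem
  have hx0 : x ≠ 0 := ne_zero_of_mem_unit_sphere ⟨x, hx1⟩
  refine ⟨r, hr, x, ?_, hx0, heig⟩
  have hrx : A (r⁻¹ • x) = x := by rw [map_smul, heig, smul_smul, inv_mul_cancel₀ hr.ne', one_smul]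
  exact hrx ▸ hA _ (hCsmul x hxC _ (by positivity)) (smul_ne_zero (inv_ne_zero hr.ne') hx0)

section DualCone

variable {d : ℕ}

theorem dotProduct_pos_of_mem_interior {D : Set (Fin d → ℝ)} {x g : Fin d → ℝ}
    (hx : x ∈ dualConeSet D) (hg : g ∈ interior D) (hx0 : x ≠ 0) : 0 < x ⬝ᵥ g := by
  obtain ⟨t, ht, hmem⟩ := exists_pos_add_smul_mem_of_mem_interior hg (-x)
  have hxx : 0 < x ⬝ᵥ x := by simpa using dotProduct_self_star_pos_iff.2 hx0
  have := hx _ hmem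
  rw [dotProduct_add, dotProduct_smul, dotProduct_neg, smul_eq_mul] at this
  nlinarith

theorem dotProduct_pos_of_mem_interior_dualConeSet {K : Set (Fin d → ℝ)} {f x : Fin d → ℝ}
    (hf : f ∈ interior (dualConeSet K)) (hx : x ∈ K) (hx0 : x ≠ 0) : 0 < f ⬝ᵥ x := by
  rw [dotProduct_comm]
  exact dotProduct_pos_of_mem_interior (fun g hg => by rw [dotProduct_comm]; exact hg x hx) hf hx0

theorem isClosed_dualConeSet (K : Set (Fin d → ℝ)) : IsClosed (dualConeSet K) := by
  simp only [dualConeSet, ofPred_forall]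
  exact isClosed_biInter fun x _ =>
    isClosed_le continuous_const (continuous_id.dotProduct continuous_const)

theorem smul_mem_dualConeSet {K : Set (Fin d → ℝ)} {f : Fin d → ℝ} (hf : f ∈ dualConeSet K)
    {c : ℝ} (hc : 0 ≤ c) : c • f ∈ dualConeSet K := fun x hx => by
  rw [smul_dotProduct, smul_eq_mul]
  exact mul_nonneg hc (hf x hx)

theorem mem_interior_dualConeSet_of_pos {K : Set (Fin d → ℝ)} (hKcl : IsClosed K)
    (hKsmul : ∀ x ∈ K, ∀ c : ℝ, 0 ≤ c → c • x ∈ K) {g : Fin d → ℝ}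
    (hg : ∀ x ∈ K, x ≠ 0 → 0 < g ⬝ᵥ x) : g ∈ interior (dualConeSet K) := by
  have hS : IsCompact (K ∩ sphere (0 : Fin d → ℝ) 1) := (isCompact_sphere 0 1).inter_left hKcl
  have hnear : ∀ᶠ g' in 𝓝 g, ∀ y ∈ K ∩ sphere 0 1, 0 < g' ⬝ᵥ y :=
    hS.eventually_forall_of_forall_eventually fun y hy =>
      (continuous_fst.dotProduct continuous_snd).continuousAt.eventually
        (lt_mem_nhds (hg y hy.1 (ne_zero_of_mem_unit_sphere ⟨y, hy.2⟩)))
  rw [mem_interior_iff_mem_nhds]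
  filter_upwards [hnear] with g' hg' x hx
  rcases eq_or_ne x 0 with rfl | hx0
  · simp
  have h := hg' _ (inv_norm_smul_mem_inter_sphere hKsmul hx hx0)
  rw [dotProduct_smul, smul_eq_mul] at h
  exact (pos_of_mul_pos_right h (by positivity)).le

def IsProperCone.toProperCone {K : Set (Fin d → ℝ)} (hK : IsProperCone K) :
    ProperCone ℝ (Fin d → ℝ) where
  carrier := K
  add_mem' hx hy := add_mem_of_convex_of_smul_mem hK.2.2.1 hK.1 hx hy
  zero_mem' := by simpa using hK.1 _ (interior_subset hK.2.2.2.1.some_mem) 0 le_rfl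
  smul_mem' c _ hx := hK.1 _ hx c c.2
  isClosed' := hK.2.1

theorem exists_mem_dualConeSet_ne_zero {K : Set (Fin d → ℝ)} (hK : IsProperCone K) {z : Fin d → ℝ}
    (hz : z ∈ K) (hz0 : z ≠ 0) : ∃ g ∈ dualConeSet K, g ≠ 0 := by
  have hnz : -z ∉ hK.toProperCone := fun h => hz0 (hK.2.2.2.2 z hz h)
  obtain ⟨φ, hφK, hφz⟩ := hK.toProperCone.hyperplane_separation_point hnz
  set g := (dotProductEquiv ℝ (Fin d)).symm (φ : Module.Dual ℝ (Fin d → ℝ))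
  have hg : ∀ x, g ⬝ᵥ x = φ x := fun x =>
    LinearMap.congr_fun ((dotProductEquiv ℝ (Fin d)).apply_symm_apply _) x
  refine ⟨g, fun x hx => (hg x).symm ▸ hφK x hx, fun h => ?_⟩
  rw [← hg, h, zero_dotProduct] at hφz
  exact lt_irrefl 0 hφz

end DualCone

theorem IsKPos.leavesInvariant {d : ℕ} {M : Matrix (Fin d) (Fin d) ℝ} {K : Set (Fin d → ℝ)}
    (hM : IsKPos M K) (hK0 : (0 : Fin d → ℝ) ∈ K) : LeavesInvariant M K := fun x hx => by
  rcases eq_or_ne x 0 with rfl | hx0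
  · simpa using hK0
  · exact interior_subset (hM x hx hx0)

theorem dotProduct_mulVec_eq_of_transpose {d : ℕ} {M : Matrix (Fin d) (Fin d) ℝ} {f : Fin d → ℝ}
    {r : ℝ} (heig : Mᵀ *ᵥ f = r • f) (v : Fin d → ℝ) : f ⬝ᵥ (M *ᵥ v) = r * f ⬝ᵥ v := by
  rw [dotProduct_mulVec, ← mulVec_transpose, heig, smul_dotProduct, smul_eq_mul]

section ConeNorm

variable {d : ℕ} {K : Set (Fin d → ℝ)} {f : Fin d → ℝ}

theorem coneNorm_le (hKconv : Convex ℝ K) (hKsmul : ∀ x ∈ K, ∀ c : ℝ, 0 ≤ c → c • x ∈ K)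
    (hf : f ∈ dualConeSet K) {x v w : Fin d → ℝ} (hv : v ∈ K) (hw : w ∈ K) (hx : x = v - w) :
    coneNorm K f x ≤ f ⬝ᵥ (v + w) := by
  refine csInf_le ⟨0, ?_⟩ ⟨v, hv, w, hw, hx, rfl⟩
  rintro _ ⟨v, hv, w, hw, -, rfl⟩
  exact hf _ (add_mem_of_convex_of_smul_mem hKconv hKsmul hv hw)

theorem le_coneNorm (hKsmul : ∀ x ∈ K, ∀ c : ℝ, 0 ≤ c → c • x ∈ K)
    (hKint : (interior K).Nonempty) {x : Fin d → ℝ} {a : ℝ}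
    (h : ∀ v ∈ K, ∀ w ∈ K, x = v - w → a ≤ f ⬝ᵥ (v + w)) : a ≤ coneNorm K f x := by
  obtain ⟨v, hv, w, hw, hx⟩ := exists_sub_eq_of_interior_nonempty hKsmul hKint x
  refine le_csInf ⟨_, v, hv, w, hw, hx, rfl⟩ ?_
  rintro _ ⟨v, hv, w, hw, hx, rfl⟩
  exact h v hv w hw hx

variable (hKconv : Convex ℝ K) (hKsmul : ∀ x ∈ K, ∀ c : ℝ, 0 ≤ c → c • x ∈ K)
  (hKint : (interior K).Nonempty) (hf : f ∈ dualConeSet K)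
include hKconv hKsmul hKint hf

theorem coneNorm_eq_dotProduct {x : Fin d → ℝ} (hx : x ∈ K) : coneNorm K f x = f ⬝ᵥ x := by
  have h0 : (0 : Fin d → ℝ) ∈ K := by simpa using hKsmul x hx 0 le_rfl
  refine le_antisymm ?_ (le_coneNorm hKsmul hKint fun v _ w hw hx => ?_)
  · simpa using coneNorm_le hKconv hKsmul hf hx h0 (sub_zero x).symm
  · rw [hx, dotProduct_add, dotProduct_sub]
    linarith [hf w hw]

theorem coneNorm_map_le {L : (Fin d → ℝ) →ₗ[ℝ] Fin d → ℝ} (hL : ∀ v ∈ K, L v ∈ K) {c : ℝ}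
    (hc : 0 < c) (hfL : ∀ v, f ⬝ᵥ L v = c * f ⬝ᵥ v) (x : Fin d → ℝ) :
    coneNorm K f (L x) ≤ c * coneNorm K f x := by
  refine (div_le_iff₀' hc).1 (le_coneNorm hKsmul hKint fun v hv w hw hx => ?_)
  rw [div_le_iff₀' hc, ← hfL, map_add]
  exact coneNorm_le hKconv hKsmul hf (hL v hv) (hL w hw) (by rw [hx, map_sub])

theorem coneNorm_neg (x : Fin d → ℝ) : coneNorm K f (-x) = coneNorm K f x := by
  have key : ∀ y, coneNorm K f (-y) ≤ coneNorm K f y := fun y =>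
    le_coneNorm hKsmul hKint fun v hv w hw hy => by
      rw [add_comm]
      exact coneNorm_le hKconv hKsmul hf hw hv (by rw [hy, neg_sub])
  exact le_antisymm (key x) (by simpa using key (-x))

theorem coneNorm_smul (c : ℝ) (x : Fin d → ℝ) : coneNorm K f (c • x) = |c| * coneNorm K f x := by
  have hle : ∀ c : ℝ, 0 < c → ∀ y, coneNorm K f (c • y) ≤ c * coneNorm K f y := fun c hc y => by
    exact coneNorm_map_le hKconv hKsmul hKint hf (L := c • LinearMap.id)
      (fun v hv => hKsmul v hv c hc.le) hc (fun v => dotProduct_smul c f v) y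
  have hpos : ∀ {c : ℝ}, 0 < c → coneNorm K f (c • x) = c * coneNorm K f x := fun {c} hc => by
    refine le_antisymm (hle c hc x) ?_
    have h := hle c⁻¹ (inv_pos.2 hc) (c • x)
    rw [inv_smul_smul₀ hc.ne'] at h
    rwa [← le_inv_mul_iff₀ hc]
  rcases lt_trichotomy c 0 with hc | rfl | hc
  · rw [← neg_neg (c • x), ← neg_smul, coneNorm_neg hKconv hKsmul hKint hf, hpos (neg_pos.2 hc),
      abs_of_neg hc]
  · obtain ⟨e, he⟩ := hKint
    have h0 : (0 : Fin d → ℝ) ∈ K := by simpa using hKsmul e (interior_subset he) 0 le_rfl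
    simp [coneNorm_eq_dotProduct hKconv hKsmul ⟨e, he⟩ hf h0]
  · rw [hpos hc, abs_of_pos hc]

theorem coneNorm_add_le (x y : Fin d → ℝ) :
    coneNorm K f (x + y) ≤ coneNorm K f x + coneNorm K f y := by
  rw [← sub_le_iff_le_add]
  refine le_coneNorm hKsmul hKint fun v₁ hv₁ w₁ hw₁ hx => ?_
  rw [sub_le_comm]
  refine le_coneNorm hKsmul hKint fun v₂ hv₂ w₂ hw₂ hy => ?_
  rw [sub_le_iff_le_add, ← dotProduct_add]
  calc coneNorm K f (x + y) ≤ f ⬝ᵥ ((v₂ + v₁) + (w₂ + w₁)) :=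
        coneNorm_le hKconv hKsmul hf (add_mem_of_convex_of_smul_mem hKconv hKsmul hv₂ hv₁)
          (add_mem_of_convex_of_smul_mem hKconv hKsmul hw₂ hw₁) (by rw [hx, hy]; abel)
    _ = f ⬝ᵥ (v₂ + w₂ + (v₁ + w₁)) := by congr 1; abel

theorem coneNorm_mulVec_le {M : Matrix (Fin d) (Fin d) ℝ} (hMK : LeavesInvariant M K) {r : ℝ}
    (hr : 0 < r) (heig : Mᵀ *ᵥ f = r • f) (x : Fin d → ℝ) :
    coneNorm K f (M *ᵥ x) ≤ r * coneNorm K f x :=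
  coneNorm_map_le hKconv hKsmul hKint hf (L := M.mulVecLin) hMK hr
    (dotProduct_mulVec_eq_of_transpose heig) x

omit hKconv hf in
theorem mul_norm_le_coneNorm {δ : ℝ} (hδ0 : 0 ≤ δ) (hδ : ∀ x ∈ K, δ * ‖x‖ ≤ f ⬝ᵥ x)
    (x : Fin d → ℝ) : δ * ‖x‖ ≤ coneNorm K f x :=
  le_coneNorm hKsmul hKint fun v hv w hw hx => by
    rw [dotProduct_add]
    calc δ * ‖x‖ ≤ δ * ‖v‖ + δ * ‖w‖ := by
          rw [← mul_add, hx]; exact mul_le_mul_of_nonneg_left (norm_sub_le v w) hδ0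
      _ ≤ f ⬝ᵥ v + f ⬝ᵥ w := add_le_add (hδ v hv) (hδ w hw)

end ConeNorm

theorem isVecNorm_coneNorm {d : ℕ} {K : Set (Fin d → ℝ)} (hKcl : IsClosed K)
    (hKconv : Convex ℝ K) (hKsmul : ∀ x ∈ K, ∀ c : ℝ, 0 ≤ c → c • x ∈ K)
    (hKint : (interior K).Nonempty) {f : Fin d → ℝ} (hfpos : ∀ x ∈ K, x ≠ 0 → 0 < f ⬝ᵥ x) :
    IsVecNorm (coneNorm K f) := by
  have hf : f ∈ dualConeSet K := fun x hx => by
    rcases eq_or_ne x 0 with rfl | hx0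
    · simp
    · exact (hfpos x hx hx0).le
  obtain ⟨δ, hδ, hδf⟩ := exists_pos_mul_norm_le_of_pos hKcl hKsmul
    (φ := dotProductEquiv ℝ (Fin d) f) (by simpa using hfpos)
  have hlower := mul_norm_le_coneNorm hKsmul hKint hδ.le (by simpa using hδf)
  refine ⟨fun x => (mul_nonneg hδ.le (norm_nonneg x)).trans (hlower x), fun x => ⟨fun hx => ?_, ?_⟩,
    coneNorm_smul hKconv hKsmul hKint hf, coneNorm_add_le hKconv hKsmul hKint hf⟩
  · by_contra hx0
    nlinarith [hlower x, norm_pos_iff.2 hx0]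
  · rintro rfl
    obtain ⟨e, he⟩ := hKint
    have h0 : (0 : Fin d → ℝ) ∈ K := by simpa using hKsmul e (interior_subset he) 0 le_rfl
    simp [coneNorm_eq_dotProduct hKconv hKsmul ⟨e, he⟩ hf h0]

section Eigenvalues

theorem norm_le_of_map_mul_le {g : ℂ → ℝ} {z : ℂ} {r B : ℝ} (hr : 0 ≤ r)
    (hsmul : ∀ t : ℝ, 0 ≤ t → ∀ c, g (t * c) = t * g c) (hbdd : ∀ c, g c ≤ B * ‖c‖)
    (hmul : ∀ c, g (c * z) ≤ r * g c) (hpos : ∃ c, 0 < g c) : ‖z‖ ≤ r := by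
  rcases eq_or_ne z 0 with rfl | hz
  · simpa using hr
  have hz' : 0 < ‖z‖ := norm_pos_iff.2 hz
  have hbddS : BddAbove (g '' sphere 0 1) := ⟨B, by
    rintro _ ⟨c, hc, rfl⟩
    simpa [mem_sphere_zero_iff_norm.1 hc] using hbdd c⟩
  have hle : ∀ c ∈ sphere (0 : ℂ) 1, g c ≤ sSup (g '' sphere 0 1) := fun c hc =>
    le_csSup hbddS (mem_image_of_mem g hc)
  have hN : 0 < sSup (g '' sphere 0 1) := by
    obtain ⟨c, hc⟩ := hpos
    have hc0 : c ≠ 0 := by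
      rintro rfl
      simp [show g 0 = 0 by simpa using hsmul 0 le_rfl 0] at hc
    have hc' : 0 < ‖c‖ := norm_pos_iff.2 hc0
    refine lt_of_lt_of_le ?_ (hle (‖c‖⁻¹ * c) (by simp [hc'.ne']))
    rw [hsmul _ (by positivity)]
    positivity
  have hkey : ∀ c ∈ sphere (0 : ℂ) 1, ‖z‖ * g c ≤ r * sSup (g '' sphere 0 1) := by
    intro c hc
    have hc₀ : ‖(‖z‖ : ℂ) * c / z‖ = 1 := by
      simp [mem_sphere_zero_iff_norm.1 hc, hz'.ne']
    calc ‖z‖ * g c = g ((‖z‖ : ℂ) * c / z * z) := by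
          rw [div_mul_cancel₀ _ hz, hsmul _ (norm_nonneg z)]
      _ ≤ r * g ((‖z‖ : ℂ) * c / z) := hmul _
      _ ≤ r * sSup (g '' sphere 0 1) :=
          mul_le_mul_of_nonneg_left (hle _ (mem_sphere_zero_iff_norm.2 hc₀)) hr
  refine le_of_mul_le_mul_right ((le_div_iff₀' hz').1 ?_) hN
  exact csSup_le ((NormedSpace.sphere_nonempty.2 zero_le_one).image g) fun _ ⟨c, hc, hgc⟩ =>
    hgc ▸ (le_div_iff₀' hz').2 (hkey c hc)

variable {d : ℕ}

theorem mulVec_re_mul {M : Matrix (Fin d) (Fin d) ℝ} {u : Fin d → ℂ} {z : ℂ}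
    (hu : M.map Complex.ofReal *ᵥ u = z • u) (c : ℂ) :
    M *ᵥ (fun i => (c * u i).re) = fun i => (c * z * u i).re := by
  funext j
  have hj := congrFun hu j
  simp only [mulVec, dotProduct, map_apply, Pi.smul_apply, smul_eq_mul] at hj
  calc ∑ i, M j i * (c * u i).re = ∑ i, (c * ((M j i : ℂ) * u i)).re :=
        Finset.sum_congr rfl fun i _ => by rw [mul_left_comm, Complex.re_ofReal_mul]
    _ = (c * ∑ i, (M j i : ℂ) * u i).re := by rw [← Complex.re_sum, ← Finset.mul_sum]
    _ = (c * z * u j).re := by rw [hj, mul_assoc]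

theorem norm_le_of_hasEigenvalue {h : (Fin d → ℝ) → ℝ} (hh : IsVecNorm h)
    {M : Matrix (Fin d) (Fin d) ℝ} {r : ℝ} (hr : 0 ≤ r) (hM : ∀ x, h (M *ᵥ x) ≤ r * h x)
    {z : ℂ} (hz : Module.End.HasEigenvalue (Matrix.toLin' (M.map Complex.ofReal)) z) :
    ‖z‖ ≤ r := by
  obtain ⟨hnonneg, hzero, hsmul, hadd⟩ := hh
  obtain ⟨u, hu⟩ := hz.exists_hasEigenvector
  have heig : M.map Complex.ofReal *ᵥ u = z • u := by
    rw [← Matrix.toLin'_apply]; exact hu.apply_eq_smul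
  refine norm_le_of_map_mul_le (g := fun c => h fun i => (c * u i).re)
    (B := h (fun i => (u i).re) + h (fun i => (u i).im)) hr (fun t ht c => ?_) (fun c => ?_)
    (fun c => ?_) ?_
  · have : (fun i => ((t : ℂ) * c * u i).re) = t • fun i => (c * u i).re := by
      funext i; simp [mul_assoc]
    simp only [this, hsmul, abs_of_nonneg ht]
  · have : (fun i => (c * u i).re) = c.re • (fun i => (u i).re) + (-c.im) • fun i => (u i).im := by
      funext i
      simp only [Complex.mul_re, neg_smul, Pi.add_apply, Pi.smul_apply, smul_eq_mul, Pi.neg_apply]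
      ring
    rw [this]
    refine (hadd _ _).trans ?_
    rw [hsmul, hsmul, abs_neg, add_mul, mul_comm _ ‖c‖, mul_comm _ ‖c‖]
    exact add_le_add (mul_le_mul_of_nonneg_right (Complex.abs_re_le_norm c) (hnonneg _))
      (mul_le_mul_of_nonneg_right (Complex.abs_im_le_norm c) (hnonneg _))
  · simpa only [mulVec_re_mul heig] using hM fun i => (c * u i).re
  · obtain ⟨i, hi⟩ := Function.ne_iff.1 hu.2
    refine ⟨star (u i), lt_of_le_of_ne (hnonneg _) (Ne.symm fun h0 => ?_)⟩
    have := congrFun ((hzero _).1 h0) i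
    simp only [Pi.zero_apply, Complex.mul_re, Complex.star_def, Complex.conj_re,
      Complex.conj_im, neg_mul, sub_neg_eq_add] at this
    exact hi (Complex.normSq_eq_zero.1 (by rw [Complex.normSq_apply]; exact this))

end Eigenvalues

section SpectralRadius

variable {d : ℕ}

theorem hasEigenvalue_map_ofReal_of_transpose {M : Matrix (Fin d) (Fin d) ℝ} {r : ℝ}
    {f : Fin d → ℝ} (hf : f ≠ 0) (h : Mᵀ *ᵥ f = r • f) :
    Module.End.HasEigenvalue (Matrix.toLin' (M.map Complex.ofReal)) r := by
  have hT : Module.End.HasEigenvalue (Matrix.toLin' Mᵀ) r :=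
    Module.End.hasEigenvalue_of_hasEigenvector
      ⟨Module.End.mem_eigenspace_iff.2 (by rwa [Matrix.toLin'_apply]), hf⟩
  rw [Module.End.hasEigenvalue_iff_isRoot_charpoly, charpoly_toLin', charpoly_transpose] at hT
  rw [Module.End.hasEigenvalue_iff_isRoot_charpoly, charpoly_toLin',
    show M.map Complex.ofReal = M.map Complex.ofRealHom from rfl, charpoly_map]
  exact hT.map

theorem specRad_eq_of_forall_norm_le {M : Matrix (Fin d) (Fin d) ℝ} {r : ℝ} (hr0 : 0 ≤ r)
    (hr : Module.End.HasEigenvalue (Matrix.toLin' (M.map Complex.ofReal)) r)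
    (hle : ∀ z, Module.End.HasEigenvalue (Matrix.toLin' (M.map Complex.ofReal)) z → ‖z‖ ≤ r) :
    specRad M = r :=
  IsGreatest.csSup_eq ⟨⟨r, hr, by simp [abs_of_nonneg hr0]⟩, fun _ ⟨z, hz, hs⟩ => hs ▸ hle z hz⟩

theorem opNorm_eq_of_forall_le {nrm : (Fin d → ℝ) → ℝ} (hnrm : IsVecNorm nrm)
    {M : Matrix (Fin d) (Fin d) ℝ} {r : ℝ} (hle : ∀ x, nrm (M *ᵥ x) ≤ r * nrm x)
    {x₀ : Fin d → ℝ} (hx₀ : x₀ ≠ 0) (heq : nrm (M *ᵥ x₀) = r * nrm x₀) : opNorm nrm M = r := by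
  have hpos : ∀ x, x ≠ 0 → 0 < nrm x := fun x hx =>
    lt_of_le_of_ne (hnrm.1 x) (Ne.symm (mt (hnrm.2.1 x).1 hx))
  exact IsGreatest.csSup_eq ⟨⟨x₀, hx₀, by rw [heq, mul_div_cancel_right₀ _ (hpos x₀ hx₀).ne']⟩,
    fun _ ⟨x, hx, hs⟩ => hs ▸ (div_le_iff₀ (hpos x hx)).2 (hle x)⟩

end SpectralRadius

theorem exists_transpose_eigenvector_mem_interior_dualConeSet {d : ℕ} [Nonempty (Fin d)]
    {K : Set (Fin d → ℝ)} (hK : IsProperCone K) {M : Matrix (Fin d) (Fin d) ℝ}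
    (hM : IsKPos M K) :
    ∃ r : ℝ, 0 < r ∧ ∃ f ∈ interior (dualConeSet K), f ≠ 0 ∧ Mᵀ *ᵥ f = r • f := by
  obtain ⟨e, he⟩ := hK.2.2.2.1
  obtain ⟨z, hz, hz0⟩ := exists_mem_ne_zero_of_interior_nonempty ⟨e, he⟩
  obtain ⟨g, hg, hg0⟩ := exists_mem_dualConeSet_ne_zero hK hz hz0
  simpa using exists_eigenvector_mem_interior_of_pos (isClosed_dualConeSet K)
    (fun _ hf _ hc => smul_mem_dualConeSet hf hc) (φ := (dotProductBilin ℝ ℝ).flip e)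
    (by simpa using fun g hg hg0 => dotProduct_pos_of_mem_interior hg he hg0) hg hg0
    (A := Matrix.toLin' Mᵀ) fun g hg hg0 =>
      mem_interior_dualConeSet_of_pos hK.2.1 hK.1 fun x hx hx0 => by
        rw [toLin'_apply, mulVec_transpose, ← dotProduct_mulVec]
        exact dotProduct_pos_of_mem_interior hg (hM x hx hx0) hg0

/-- For a `K`-positive `M` there is `f ∈ int K*`, a left Perron eigenvector of
`M` for the eigenvalue `ρ(M)`, whose induced cone linear absolute norm satisfies
`‖M‖_f = ρ(M)`. -/
theorem stmt_8 {d : ℕ} (K : Set (Fin d → ℝ)) (hK : IsProperCone K)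
    (M : Matrix (Fin d) (Fin d) ℝ) (hM : IsKPos M K) :
    ∃ f ∈ interior (dualConeSet K),
      M.transpose.mulVec f = specRad M • f ∧ opNorm (coneNorm K f) M = specRad M := by
  cases isEmpty_or_nonempty (Fin d)
  · have h0 (x : Fin d → ℝ) : x = 0 := Subsingleton.elim x 0
    refine ⟨0, by simp [dualConeSet, dotProduct], by simp, ?_⟩
    simp [opNorm, specRad, Module.End.hasEigenvalue_iff, Submodule.eq_bot_of_subsingleton, h0]
  obtain ⟨r, hr, f, hf, hf0, heig⟩ := exists_transpose_eigenvector_mem_interior_dualConeSet hK hM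
  obtain ⟨hKsmul, hKcl, hKconv, hKint, -⟩ := hK
  obtain ⟨z, hz, hz0⟩ := exists_mem_ne_zero_of_interior_nonempty hKint
  have hf' : f ∈ dualConeSet K := interior_subset hf
  have hMK : LeavesInvariant M K := hM.leavesInvariant (by simpa using hKsmul z hz 0 le_rfl)
  have hnorm := isVecNorm_coneNorm hKcl hKconv hKsmul hKint fun x hx hx0 =>
    dotProduct_pos_of_mem_interior_dualConeSet hf hx hx0
  have hcontr := coneNorm_mulVec_le hKconv hKsmul hKint hf' hMK hr heig
  have hspec : specRad M = r :=
    specRad_eq_of_forall_norm_le hr.le (hasEigenvalue_map_ofReal_of_transpose hf0 heig)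
      fun _ hμ => norm_le_of_hasEigenvalue hnorm hr.le hcontr hμ
  refine ⟨f, hf, hspec ▸ heig, hspec ▸ opNorm_eq_of_forall_le hnorm hcontr hz0 ?_⟩
  rw [coneNorm_eq_dotProduct hKconv hKsmul hKint hf' (hMK z hz),
    coneNorm_eq_dotProduct hKconv hKsmul hKint hf' hz, dotProduct_mulVec_eq_of_transpose heig]
end

section
/- For a compactly supported probability distribution μ on R^{d×d} and positive integers p, k, the p-radii satisfy ρ_{p,μ} = (ρ_{p/k, μ^{⊗k}})^{1/k}, where μ^{⊗k} is the pushforward of μ under the map A ↦ A^{⊗k}. In particular ρ_{2q,μ} = (ρ_{2,μ^{⊗q}})^{1/q} for every positive integer q. -/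
open Matrix Set

/-- The index equivalence `Fin (d^p) × Fin d ≃ Fin (d^(p+1))`. -/
def kronEquiv (d p : ℕ) : Fin (d ^ p) × Fin d ≃ Fin (d ^ (p + 1)) :=
  finProdFinEquiv.trans (finCongr (pow_succ d p).symm)

/-- The `p`-th Kronecker power of a square matrix. -/
noncomputable def kronPow {d : ℕ} (M : Matrix (Fin d) (Fin d) ℝ) :
    (p : ℕ) → Matrix (Fin (d ^ p)) (Fin (d ^ p)) ℝ
  | 0 => 1
  | p + 1 => Matrix.reindex (kronEquiv d p) (kronEquiv d p)
      (Matrix.kroneckerMap (· * ·) (kronPow M p) M)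

/-- The `p`-th Kronecker power of a vector. -/
noncomputable def vecKronPow {d : ℕ} (x : Fin d → ℝ) : (p : ℕ) → (Fin (d ^ p) → ℝ)
  | 0 => fun _ => 1
  | p + 1 => fun i =>
      vecKronPow x p ((kronEquiv d p).symm i).1 * x ((kronEquiv d p).symm i).2

open MeasureTheory Filter

instance matMeasurableSpace {d : ℕ} : MeasurableSpace (Matrix (Fin d) (Fin d) ℝ) :=
  inferInstanceAs (MeasurableSpace (Fin d → Fin d → ℝ))

/-- The (topological) support of a measure on matrices. -/
def msupport {d : ℕ} (μ : Measure (Matrix (Fin d) (Fin d) ℝ)) :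
    Set (Matrix (Fin d) (Fin d) ℝ) :=
  {A | ∀ U : Set (Matrix (Fin d) (Fin d) ℝ), IsOpen U → A ∈ U → μ U ≠ 0}

/-- `nrm` is a norm on `d × d` real matrices. -/
def IsMatNorm {d : ℕ} (nrm : Matrix (Fin d) (Fin d) ℝ → ℝ) : Prop :=
  (∀ M, 0 ≤ nrm M) ∧ (∀ M, nrm M = 0 ↔ M = 0) ∧
    (∀ (c : ℝ) M, nrm (c • M) = |c| * nrm M) ∧ ∀ M N, nrm (M + N) ≤ nrm M + nrm N

/-- `E[‖A_k ⋯ A_1‖^p]` for `A_1, …, A_k` i.i.d. with law `μ`. -/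
noncomputable def prodSeq {d : ℕ} (μ : Measure (Matrix (Fin d) (Fin d) ℝ))
    (nrm : Matrix (Fin d) (Fin d) ℝ → ℝ) (p : ℝ) (k : ℕ) : ℝ :=
  ∫ A : Fin k → Matrix (Fin d) (Fin d) ℝ,
    nrm ((List.ofFn A).reverse.prod) ^ p ∂(Measure.pi fun _ => μ)

/-- The `L^p`-norm joint spectral radius (`p`-radius)
`ρ_{p,μ} = lim_{k→∞} (E[‖A_k ⋯ A_1‖^p])^{1/(pk)}` (as a `limsup`). -/
noncomputable def pRad {d : ℕ} (μ : Measure (Matrix (Fin d) (Fin d) ℝ))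
    (nrm : Matrix (Fin d) (Fin d) ℝ → ℝ) (p : ℝ) : ℝ :=
  limsup (fun k : ℕ => prodSeq μ nrm p k ^ (1 / (p * k))) atTop

/-- The joint spectral radius
`ρ̂(M) = limsup_{k→∞} sup_{A_1,…,A_k ∈ M} ‖A_k ⋯ A_1‖^{1/k}`. -/
noncomputable def jsr {d : ℕ} (Mset : Set (Matrix (Fin d) (Fin d) ℝ))
    (nrm : Matrix (Fin d) (Fin d) ℝ → ℝ) : ℝ :=
  limsup (fun k : ℕ => sSup {r | ∃ A : Fin k → Matrix (Fin d) (Fin d) ℝ,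
    (∀ i, A i ∈ Mset) ∧ r = nrm ((List.ofFn A).reverse.prod) ^ ((1 : ℝ) / k)}) atTop

/-- The entrywise mean matrix `E[A]` of `μ`. -/
noncomputable def meanMat {d : ℕ} (μ : Measure (Matrix (Fin d) (Fin d) ℝ)) :
    Matrix (Fin d) (Fin d) ℝ :=
  Matrix.of fun i j => ∫ X, X i j ∂μ


/-! Every matrix norm is equivalent to the Frobenius norm `‖·‖`, which is multiplicative on
Kronecker products, so `‖A^{⊗k}‖ = ‖A‖^k`; moreover `A ↦ A^{⊗k}` is multiplicative. Hence both
`E‖A_m ⋯ A_1‖^p` and `E‖(A_m ⋯ A_1)^{⊗k}‖^{p/k}` lie within constant factors of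
`S_m = E‖A_m ⋯ A_1‖_F^p`. Constant factors disappear after taking `(pm)`-th roots, and compact
support bounds `S_m^{1/(pm)}`, so all `limsup`s are genuine. Finally the `((p/k)m)`-th root is the
`k`-th power of the `(pm)`-th root, and `x ↦ x^k` commutes with `limsup`. -/

open Topology

theorem tendsto_rpow_one_div_mul_natCast {c : ℝ} (hc : 0 < c) (s : ℝ) :
    Tendsto (fun m : ℕ => c ^ (1 / (s * m))) atTop (𝓝 1) := by
  have h : Tendsto (fun m : ℕ => 1 / (s * m)) atTop (𝓝 0) := by
    simpa [div_eq_mul_inv, mul_inv, mul_comm] using tendsto_const_div_atTop_nhds_zero_nat s⁻¹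
  simpa [Function.comp_def] using ((Real.continuousAt_const_rpow hc.ne').tendsto).comp h

theorem isBoundedUnder_rpow_one_div_mul_natCast {b : ℕ → ℝ} {K L s : ℝ} (hK : 0 ≤ K)
    (hL : 0 ≤ L) (hs : 0 < s) (hb0 : ∀ m, 0 ≤ b m) (hb : ∀ m, b m ≤ K * L ^ m) :
    IsBoundedUnder (· ≤ ·) atTop fun m => b m ^ (1 / (s * m)) := by
  have hlim := (tendsto_rpow_one_div_mul_natCast (by linarith : 0 < K + 1) s).mul_const
    (L ^ (1 / s))
  refine hlim.isBoundedUnder_le.mono_le ?_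
  filter_upwards [eventually_ge_atTop 1] with m hm
  have hm0 : (m : ℝ) ≠ 0 := by positivity
  have he : 0 ≤ 1 / (s * m) := by positivity
  calc b m ^ (1 / (s * m)) ≤ ((K + 1) * L ^ m) ^ (1 / (s * m)) :=
        Real.rpow_le_rpow (hb0 m) ((hb m).trans (by nlinarith [pow_nonneg hL m])) he
    _ = (K + 1) ^ (1 / (s * m)) * L ^ (1 / s) := by
        rw [Real.mul_rpow (by linarith) (by positivity), ← Real.rpow_natCast,
          ← Real.rpow_mul hL]
        congr 2
        field_simp

theorem limsup_eq_of_le_mul_of_le_mul {u v g h : ℕ → ℝ} (hu0 : ∀ m, 0 ≤ u m)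
    (hu : IsBoundedUnder (· ≤ ·) atTop u) (hg : Tendsto g atTop (𝓝 1))
    (hh : Tendsto h atTop (𝓝 1)) (hgv : ∀ m, g m * u m ≤ v m) (hvh : ∀ m, v m ≤ h m * u m) :
    limsup v atTop = limsup u atTop := by
  have hg0 : ∀ᶠ m in atTop, 0 ≤ g m := hg.eventually (eventually_ge_nhds zero_lt_one)
  have hh0 : ∀ᶠ m in atTop, 0 ≤ h m := hh.eventually (eventually_ge_nhds zero_lt_one)
  have hu0' : 0 ≤ᶠ[atTop] u := Eventually.of_forall hu0
  have hgu0 : ∀ᶠ m in atTop, 0 ≤ u m * g m := hg0.mono fun m hm => mul_nonneg (hu0 m) hm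
  have hhu : IsBoundedUnder (· ≤ ·) atTop (h * u) :=
    isBoundedUnder_le_mul_of_nonneg hh0.frequently hh.isBoundedUnder_le hu0' hu
  have hv : IsBoundedUnder (· ≤ ·) atTop v := hhu.mono_le (Eventually.of_forall hvh)
  have hv0 : ∀ᶠ m in atTop, 0 ≤ v m :=
    hgu0.mono fun m hm => (mul_comm (u m) (g m) ▸ hm).trans (hgv m)
  refine le_antisymm ?_ ?_
  · calc limsup v atTop ≤ limsup (h * u) atTop :=
          limsup_le_limsup (Eventually.of_forall hvh)
            (isBoundedUnder_of_eventually_ge hv0).isCoboundedUnder_le hhu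
      _ ≤ limsup h atTop * limsup u atTop :=
          limsup_mul_le hh0.frequently hh.isBoundedUnder_le hu0' hu
      _ = limsup u atTop := by rw [hh.limsup_eq, one_mul]
  · calc limsup u atTop = limsup u atTop * liminf g atTop := by rw [hg.liminf_eq, mul_one]
      _ ≤ limsup (u * g) atTop :=
          le_limsup_mul hu0'.frequently hu hg0 hg.isBoundedUnder_le
      _ ≤ limsup v atTop :=
          limsup_le_limsup (Eventually.of_forall fun m => (mul_comm (u m) (g m)).trans_le (hgv m))
            (isBoundedUnder_of_eventually_ge hgu0).isCoboundedUnder_le hv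

theorem limsup_rpow_one_div_mul_natCast_eq {a b : ℕ → ℝ} {c C s : ℝ} (hc : 0 < c) (hC : 0 < C)
    (hs : 0 ≤ s) (hb0 : ∀ m, 0 ≤ b m)
    (hb : IsBoundedUnder (· ≤ ·) atTop fun m => b m ^ (1 / (s * m)))
    (hab : ∀ m, c * b m ≤ a m ∧ a m ≤ C * b m) :
    limsup (fun m => a m ^ (1 / (s * m))) atTop = limsup (fun m => b m ^ (1 / (s * m))) atTop := by
  refine limsup_eq_of_le_mul_of_le_mul (fun m => Real.rpow_nonneg (hb0 m) _) hb
    (tendsto_rpow_one_div_mul_natCast hc s) (tendsto_rpow_one_div_mul_natCast hC s)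
    (fun m => ?_) (fun m => ?_)
  all_goals have he : 0 ≤ 1 / (s * m) := by positivity
  · rw [← Real.mul_rpow hc.le (hb0 m)]
    exact Real.rpow_le_rpow (mul_nonneg hc.le (hb0 m)) (hab m).1 he
  · rw [← Real.mul_rpow hC.le (hb0 m)]
    exact Real.rpow_le_rpow ((mul_nonneg hc.le (hb0 m)).trans (hab m).1) (hab m).2 he

theorem limsup_pow_of_nonneg {w : ℕ → ℝ} (hw0 : ∀ m, 0 ≤ w m)
    (hw : IsBoundedUnder (· ≤ ·) atTop w) (k : ℕ) :
    limsup (fun m => w m ^ k) atTop = limsup w atTop ^ k := by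
  have hmono : Monotone fun x : ℝ => max x 0 ^ k :=
    fun x y hxy => pow_le_pow_left₀ (le_max_right x 0) (max_le_max hxy le_rfl) k
  have hcob : IsCoboundedUnder (· ≤ ·) atTop w :=
    (isBoundedUnder_of_eventually_ge (Eventually.of_forall hw0)).isCoboundedUnder_le
  have hS : 0 ≤ limsup w atTop := le_limsup_of_frequently_le (Frequently.of_forall hw0) hw
  have := hmono.map_limsup_of_continuousAt w
    ((continuous_id.max continuous_const).pow k).continuousAt hw hcob
  simpa [Function.comp_def, max_eq_left (hw0 _), max_eq_left hS] using this.symm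

-- The Frobenius norm is submultiplicative and multiplicative on Kronecker products.
attribute [local instance] Matrix.frobeniusNormedAddCommGroup Matrix.frobeniusNormedSpace

theorem Matrix.frobenius_norm_kroneckerMap {l m n o α : Type*} [Fintype l] [Fintype m]
    [Fintype n] [Fintype o] [NormedRing α] [NormMulClass α] (A : Matrix l m α)
    (B : Matrix n o α) :
    ‖kroneckerMap (· * ·) A B‖ = ‖A‖ * ‖B‖ := by
  rw [frobenius_norm_def, frobenius_norm_def, frobenius_norm_def,
    ← Real.mul_rpow (by positivity) (by positivity)]
  simp only [Fintype.sum_prod_type, kroneckerMap_apply, norm_mul,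
    Real.mul_rpow (norm_nonneg _) (norm_nonneg _), Finset.sum_mul_sum]

theorem Matrix.frobenius_norm_submatrix_equiv {l m n o α : Type*} [Fintype l] [Fintype m]
    [Fintype n] [Fintype o] [NormedAddCommGroup α] (A : Matrix m n α) (e₁ : l ≃ m)
    (e₂ : o ≃ n) :
    ‖A.submatrix e₁ e₂‖ = ‖A‖ := by
  rw [frobenius_norm_def, frobenius_norm_def]
  congr 1
  exact Fintype.sum_equiv e₁ _ _ fun i => Fintype.sum_equiv e₂ _ _ fun j => rfl

theorem Matrix.frobenius_norm_list_prod_le {n α : Type*} [Fintype n] [DecidableEq n] [RCLike α]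
    {R : ℝ} (l : List (Matrix n n α)) (hl : ∀ M ∈ l, ‖M‖ ≤ R) :
    ‖l.prod‖ ≤ ‖(1 : Matrix n n α)‖ * R ^ l.length := by
  induction l with
  | nil => simp
  | cons M l ih =>
    have hM := hl M List.mem_cons_self
    have ih := ih fun N hN => hl N (List.mem_cons_of_mem M hN)
    calc ‖(M :: l).prod‖ ≤ ‖M‖ * ‖l.prod‖ := frobenius_norm_mul M l.prod
      _ ≤ R * (‖(1 : Matrix n n α)‖ * R ^ l.length) :=
          mul_le_mul hM ih (norm_nonneg _) ((norm_nonneg M).trans hM)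
      _ = ‖(1 : Matrix n n α)‖ * R ^ (M :: l).length := by
          rw [List.length_cons, pow_succ]; ring

/-- A type synonym of `E` whose norm is `nrm`, so that the equivalence of norms on
finite-dimensional spaces can be applied to `nrm`. -/
def WithNormFun {E : Type*} (_nrm : E → ℝ) : Type _ := E

namespace WithNormFun

variable {E : Type*} [NormedAddCommGroup E] [NormedSpace ℝ E] {nrm : E → ℝ}

instance : AddCommGroup (WithNormFun nrm) := inferInstanceAs (AddCommGroup E)

instance : Module ℝ (WithNormFun nrm) := inferInstanceAs (Module ℝ E)

instance [FiniteDimensional ℝ E] : FiniteDimensional ℝ (WithNormFun nrm) :=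
  inferInstanceAs (FiniteDimensional ℝ E)

instance : Norm (WithNormFun nrm) := ⟨nrm⟩

def equiv : E ≃ₗ[ℝ] WithNormFun nrm := LinearEquiv.refl ℝ E

end WithNormFun

theorem continuous_and_exists_bounds_of_norm_axioms {E : Type*} [NormedAddCommGroup E]
    [NormedSpace ℝ E] [FiniteDimensional ℝ E] {nrm : E → ℝ} (h₀ : ∀ x, 0 ≤ nrm x)
    (h₁ : ∀ x, nrm x = 0 ↔ x = 0)
    (h₂ : ∀ (c : ℝ) x, nrm (c • x) = |c| * nrm x) (h₃ : ∀ x y, nrm (x + y) ≤ nrm x + nrm y) :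
    Continuous nrm ∧ ∃ c C : ℝ, 0 < c ∧ 0 < C ∧ ∀ x, c * ‖x‖ ≤ nrm x ∧ nrm x ≤ C * ‖x‖ := by
  let core : NormedSpace.Core ℝ (WithNormFun nrm) :=
    { norm_nonneg := h₀, norm_smul := h₂, norm_triangle := h₃, norm_eq_zero_iff := h₁ }
  let := NormedAddCommGroup.ofCore core
  let := NormedSpace.ofCore core
  let e : E ≃L[ℝ] WithNormFun nrm := WithNormFun.equiv.toContinuousLinearEquiv
  obtain ⟨C, hC, hle⟩ := (e : E →L[ℝ] WithNormFun nrm).bound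
  obtain ⟨C', hC', hge⟩ := (e.symm : WithNormFun nrm →L[ℝ] E).bound
  refine ⟨continuous_norm.comp e.continuous, C'⁻¹, C, inv_pos.2 hC', hC, fun x => ⟨?_, hle x⟩⟩
  rw [inv_mul_le_iff₀ hC']
  exact hge (e x)

theorem IsMatNorm.exists_frobenius_bounds {n : ℕ} {nrm : Matrix (Fin n) (Fin n) ℝ → ℝ}
    (h : IsMatNorm nrm) :
    Continuous nrm ∧ ∃ c C : ℝ, 0 < c ∧ 0 < C ∧ ∀ M, c * ‖M‖ ≤ nrm M ∧ nrm M ≤ C * ‖M‖ :=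
  continuous_and_exists_bounds_of_norm_axioms h.1 h.2.1 h.2.2.1 h.2.2.2

section kronPow

variable {d : ℕ}

theorem kronPow_one (k : ℕ) : kronPow (1 : Matrix (Fin d) (Fin d) ℝ) k = 1 := by
  induction k with
  | zero => rfl
  | succ k ih =>
    rw [kronPow, ih, Matrix.one_kronecker_one, Matrix.reindex_apply, Matrix.submatrix_one_equiv]

theorem kronPow_mul (M N : Matrix (Fin d) (Fin d) ℝ) (k : ℕ) :
    kronPow (M * N) k = kronPow M k * kronPow N k := by
  induction k with
  | zero => exact (Matrix.one_mul 1).symm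
  | succ k ih =>
    rw [kronPow, kronPow, kronPow, ih, Matrix.mul_kronecker_mul, Matrix.reindex_apply,
      Matrix.reindex_apply, Matrix.reindex_apply, Matrix.submatrix_mul_equiv]

noncomputable def kronPowHom (d k : ℕ) :
    Matrix (Fin d) (Fin d) ℝ →* Matrix (Fin (d ^ k)) (Fin (d ^ k)) ℝ where
  toFun M := kronPow M k
  map_one' := kronPow_one k
  map_mul' M N := kronPow_mul M N k

theorem kronPow_list_prod (l : List (Matrix (Fin d) (Fin d) ℝ)) (k : ℕ) :
    kronPow l.prod k = (l.map fun M => kronPow M k).prod :=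
  map_list_prod (kronPowHom d k) l

theorem norm_kronPow (M : Matrix (Fin d) (Fin d) ℝ) (k : ℕ) : ‖kronPow M k‖ = ‖M‖ ^ k := by
  induction k with
  | zero =>
    have h := congrArg NNReal.toReal (Matrix.frobenius_nnnorm_one (n := Fin (d ^ 0)) (α := ℝ))
    simp only [coe_nnnorm, NNReal.coe_mul, Fintype.card_fin, norm_one] at h
    rw [kronPow, h]
    simp
  | succ k ih =>
    rw [kronPow, Matrix.reindex_apply, Matrix.frobenius_norm_submatrix_equiv,
      Matrix.frobenius_norm_kroneckerMap, ih, pow_succ]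

theorem continuous_kronPow (k : ℕ) :
    Continuous fun M : Matrix (Fin d) (Fin d) ℝ => kronPow M k := by
  induction k with
  | zero => exact continuous_const
  | succ k ih =>
    refine continuous_matrix fun i j => ?_
    simp only [kronPow, Matrix.reindex_apply, Matrix.submatrix_apply, Matrix.kroneckerMap_apply]
    exact (ih.matrix_elem _ _).mul (continuous_id.matrix_elem _ _)

end kronPow

instance matSecondCountableTopology {d : ℕ} :
    SecondCountableTopology (Matrix (Fin d) (Fin d) ℝ) :=
  inferInstanceAs (SecondCountableTopology (Fin d → Fin d → ℝ))

instance matBorelSpace {d : ℕ} : BorelSpace (Matrix (Fin d) (Fin d) ℝ) :=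
  inferInstanceAs (BorelSpace (Fin d → Fin d → ℝ))

theorem continuous_list_ofFn_reverse_prod {d m : ℕ} :
    Continuous fun A : Fin m → Matrix (Fin d) (Fin d) ℝ => (List.ofFn A).reverse.prod := by
  simp only [List.ofFn_eq_map, ← List.map_reverse]
  exact continuous_list_prod _ fun i _ => continuous_apply i

theorem exists_ae_norm_le {d : ℕ} (μ : Measure (Matrix (Fin d) (Fin d) ℝ))
    (hsupp : IsCompact (msupport μ)) (hfull : μ (msupport μ)ᶜ = 0) :
    ∃ R : ℝ, 0 ≤ R ∧ ∀ᵐ A ∂μ, ‖A‖ ≤ R := by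
  obtain ⟨R, hR⟩ := hsupp.isBounded.exists_norm_le
  refine ⟨max R 0, le_max_right R 0, ae_iff.2 (measure_mono_null ?_ hfull)⟩
  exact fun A hA hmem => hA ((hR A hmem).trans (le_max_left R 0))

section prodSeq

variable {n : ℕ} {ν : Measure (Matrix (Fin n) (Fin n) ℝ)} [IsProbabilityMeasure ν] {R : ℝ}

theorem ae_norm_list_ofFn_reverse_prod_le (hR : ∀ᵐ A ∂ν, ‖A‖ ≤ R) (m : ℕ) :
    ∀ᵐ a ∂(Measure.pi fun _ : Fin m => ν),
      ‖(List.ofFn a).reverse.prod‖ ≤ ‖(1 : Matrix (Fin n) (Fin n) ℝ)‖ * R ^ m := by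
  have hall : ∀ᵐ a ∂(Measure.pi fun _ : Fin m => ν), ∀ i, ‖a i‖ ≤ R :=
    ae_all_iff.2 fun i =>
      (Measure.tendsto_eval_ae_ae (μ := fun _ : Fin m => ν) (i := i)).eventually hR
  filter_upwards [hall] with a ha
  simpa using Matrix.frobenius_norm_list_prod_le (List.ofFn a).reverse (by simpa using ha)

theorem integrable_norm_list_ofFn_reverse_prod_rpow (hR : ∀ᵐ A ∂ν, ‖A‖ ≤ R) {s : ℝ}
    (hs : 0 ≤ s) (m : ℕ) :
    Integrable (fun a : Fin m → Matrix (Fin n) (Fin n) ℝ => ‖(List.ofFn a).reverse.prod‖ ^ s)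
      (Measure.pi fun _ => ν) := by
  refine Integrable.of_bound ((continuous_norm.comp continuous_list_ofFn_reverse_prod).measurable
    |>.pow_const s).aestronglyMeasurable ((‖(1 : Matrix (Fin n) (Fin n) ℝ)‖ * R ^ m) ^ s) ?_
  filter_upwards [ae_norm_list_ofFn_reverse_prod_le hR m] with a ha
  rw [Real.norm_of_nonneg (by positivity)]
  exact Real.rpow_le_rpow (norm_nonneg _) ha hs

theorem prodSeq_norm_le (hR : ∀ᵐ A ∂ν, ‖A‖ ≤ R) (hR0 : 0 ≤ R) {s : ℝ} (hs : 0 ≤ s) (m : ℕ) :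
    prodSeq ν (fun M => ‖M‖) s m ≤ ‖(1 : Matrix (Fin n) (Fin n) ℝ)‖ ^ s * (R ^ s) ^ m := by
  rw [Real.rpow_pow_comm hR0, ← Real.mul_rpow (norm_nonneg _) (by positivity)]
  refine (integral_mono_ae (integrable_norm_list_ofFn_reverse_prod_rpow hR hs m)
    (integrable_const ((‖(1 : Matrix (Fin n) (Fin n) ℝ)‖ * R ^ m) ^ s)) ?_).trans_eq (by simp)
  filter_upwards [ae_norm_list_ofFn_reverse_prod_le hR m] with a ha
  exact Real.rpow_le_rpow (norm_nonneg _) ha hs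

theorem prodSeq_bounds_of_norm_bounds (hR : ∀ᵐ A ∂ν, ‖A‖ ≤ R) {nrm : Matrix (Fin n) (Fin n) ℝ → ℝ}
    (hnrm : Continuous nrm) {c C s : ℝ} (hc : 0 ≤ c) (hC : 0 ≤ C) (hs : 0 ≤ s)
    (h : ∀ M, c * ‖M‖ ≤ nrm M ∧ nrm M ≤ C * ‖M‖) (m : ℕ) :
    c ^ s * prodSeq ν (fun M => ‖M‖) s m ≤ prodSeq ν nrm s m ∧
      prodSeq ν nrm s m ≤ C ^ s * prodSeq ν (fun M => ‖M‖) s m := by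
  set P := fun a : Fin m → Matrix (Fin n) (Fin n) ℝ => (List.ofFn a).reverse.prod
  have hlow : ∀ a, c ^ s * ‖P a‖ ^ s ≤ nrm (P a) ^ s := fun a => by
    rw [← Real.mul_rpow hc (norm_nonneg _)]
    exact Real.rpow_le_rpow (by positivity) (h _).1 hs
  have hhigh : ∀ a, nrm (P a) ^ s ≤ C ^ s * ‖P a‖ ^ s := fun a => by
    rw [← Real.mul_rpow hC (norm_nonneg _)]
    exact Real.rpow_le_rpow ((mul_nonneg hc (norm_nonneg _)).trans (h _).1) (h _).2 hs
  have hg := (integrable_norm_list_ofFn_reverse_prod_rpow hR hs m).const_mul (C ^ s)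
  have hf : Integrable (fun a => nrm (P a) ^ s) (Measure.pi fun _ => ν) := by
    refine hg.mono' ((hnrm.comp continuous_list_ofFn_reverse_prod).measurable.pow_const
      s).aestronglyMeasurable (Eventually.of_forall fun a => ?_)
    rw [Real.norm_of_nonneg ((mul_nonneg (by positivity) (by positivity)).trans (hlow a))]
    exact hhigh a
  constructor
  · rw [prodSeq, prodSeq, ← integral_const_mul]
    exact integral_mono ((integrable_norm_list_ofFn_reverse_prod_rpow hR hs m).const_mul _)
      hf hlow
  · rw [prodSeq, prodSeq, ← integral_const_mul]
    exact integral_mono hf hg hhigh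

theorem isBoundedUnder_prodSeq_norm_rpow (hR : ∀ᵐ A ∂ν, ‖A‖ ≤ R) (hR0 : 0 ≤ R) {s : ℝ}
    (hs : 0 < s) :
    IsBoundedUnder (· ≤ ·) atTop fun m => prodSeq ν (fun M => ‖M‖) s m ^ (1 / (s * m)) :=
  isBoundedUnder_rpow_one_div_mul_natCast (by positivity) (by positivity) hs
    (fun m => integral_nonneg fun a => by positivity) (prodSeq_norm_le hR hR0 hs.le)

theorem pRad_eq_limsup_prodSeq_norm (hR : ∀ᵐ A ∂ν, ‖A‖ ≤ R) (hR0 : 0 ≤ R)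
    {nrm : Matrix (Fin n) (Fin n) ℝ → ℝ} (hnrm : IsMatNorm nrm) {s : ℝ} (hs : 0 < s) :
    pRad ν nrm s = limsup (fun m => prodSeq ν (fun M => ‖M‖) s m ^ (1 / (s * m))) atTop := by
  obtain ⟨hcont, c, C, hc, hC, h⟩ := hnrm.exists_frobenius_bounds
  exact limsup_rpow_one_div_mul_natCast_eq (Real.rpow_pos_of_pos hc s)
    (Real.rpow_pos_of_pos hC s) hs.le (fun m => integral_nonneg fun a => by positivity)
    (isBoundedUnder_prodSeq_norm_rpow hR hR0 hs)
    (prodSeq_bounds_of_norm_bounds hR hcont hc.le hC.le hs.le h)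

end prodSeq

instance isProbabilityMeasure_map_kronPow {d : ℕ} (μ : Measure (Matrix (Fin d) (Fin d) ℝ))
    [IsProbabilityMeasure μ] (k : ℕ) : IsProbabilityMeasure (μ.map fun A => kronPow A k) :=
  Measure.isProbabilityMeasure_map (continuous_kronPow k).measurable.aemeasurable

theorem ae_norm_kronPow_le {d : ℕ} {μ : Measure (Matrix (Fin d) (Fin d) ℝ)} {R : ℝ}
    (hR : ∀ᵐ A ∂μ, ‖A‖ ≤ R) (k : ℕ) : ∀ᵐ B ∂(μ.map fun A => kronPow A k), ‖B‖ ≤ R ^ k := by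
  have hnorm : Continuous fun B : Matrix (Fin (d ^ k)) (Fin (d ^ k)) ℝ => ‖B‖ := continuous_norm
  refine (ae_map_iff (continuous_kronPow k).measurable.aemeasurable
    (measurableSet_le hnorm.measurable measurable_const)).2 ?_
  filter_upwards [hR] with A hA
  rw [norm_kronPow]
  exact pow_le_pow_left₀ (norm_nonneg A) hA k

theorem prodSeq_map_kronPow {d : ℕ} (μ : Measure (Matrix (Fin d) (Fin d) ℝ))
    [IsFiniteMeasure μ] (k : ℕ) {f : Matrix (Fin (d ^ k)) (Fin (d ^ k)) ℝ → ℝ}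
    (hf : Measurable f) (q : ℝ) (m : ℕ) :
    prodSeq (μ.map fun A => kronPow A k) f q m
      = ∫ a : Fin m → Matrix (Fin d) (Fin d) ℝ,
          f (kronPow ((List.ofFn a).reverse.prod) k) ^ q ∂(Measure.pi fun _ => μ) := by
  have hmp : MeasurePreserving (fun (a : Fin m → Matrix (Fin d) (Fin d) ℝ) i => kronPow (a i) k)
      (Measure.pi fun _ => μ) (Measure.pi fun _ => μ.map fun A => kronPow A k) :=
    measurePreserving_pi _ _ fun _ => (continuous_kronPow k).measurable.measurePreserving _
  have hg : Measurable fun B : Fin m → Matrix (Fin (d ^ k)) (Fin (d ^ k)) ℝ =>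
      f (List.ofFn B).reverse.prod ^ q :=
    (hf.comp continuous_list_ofFn_reverse_prod.measurable).pow_const q
  rw [prodSeq, ← hmp.map_eq, integral_map hmp.measurable.aemeasurable hg.aestronglyMeasurable]
  simp [kronPow_list_prod, List.map_reverse, List.map_ofFn, Function.comp_def]

theorem prodSeq_map_kronPow_norm {d : ℕ} (μ : Measure (Matrix (Fin d) (Fin d) ℝ))
    [IsFiniteMeasure μ] {k : ℕ} (hk : k ≠ 0) (p : ℝ) (m : ℕ) :
    prodSeq (μ.map fun A => kronPow A k) (fun M => ‖M‖) (p / k) m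
      = prodSeq μ (fun M => ‖M‖) p m := by
  have hnorm : Continuous fun M : Matrix (Fin (d ^ k)) (Fin (d ^ k)) ℝ => ‖M‖ := continuous_norm
  rw [prodSeq_map_kronPow μ k hnorm.measurable, prodSeq]
  congr 1
  funext a
  rw [norm_kronPow, ← Real.rpow_natCast, ← Real.rpow_mul (norm_nonneg _)]
  congr 1
  field_simp

/-- `ρ_{p,μ} = (ρ_{p/k, μ^{⊗k}})^{1/k}` where `μ^{⊗k}` is the pushforward of
`μ` under `A ↦ A^{⊗k}`. -/
theorem stmt_12 {d : ℕ} (μ : Measure (Matrix (Fin d) (Fin d) ℝ)) [IsProbabilityMeasure μ]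
    (hsupp : IsCompact (msupport μ)) (hfull : μ (msupport μ)ᶜ = 0)
    (p k : ℕ) (hp : 0 < p) (hk : 0 < k)
    (nrm : Matrix (Fin d) (Fin d) ℝ → ℝ) (hnrm : IsMatNorm nrm)
    (nrm' : Matrix (Fin (d ^ k)) (Fin (d ^ k)) ℝ → ℝ) (hnrm' : IsMatNorm nrm') :
    pRad μ nrm p
      = (pRad (μ.map fun A => kronPow A k) nrm' ((p : ℝ) / k)) ^ ((1 : ℝ) / k) := by
  obtain ⟨R, hR0, hR⟩ := exists_ae_norm_le μ hsupp hfull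
  have hp0 : (0 : ℝ) < p := by exact_mod_cast hp
  have hS m : 0 ≤ prodSeq μ (fun M => ‖M‖) p m := integral_nonneg fun a => by positivity
  -- also at `m = 0`, where both exponents are `1 / 0 = 0`
  have hroot m : prodSeq μ (fun M => ‖M‖) p m ^ (1 / ((p / k : ℝ) * m))
      = (prodSeq μ (fun M => ‖M‖) p m ^ (1 / ((p : ℝ) * m))) ^ k := by
    rw [← Real.rpow_natCast, ← Real.rpow_mul (hS m)]
    rcases eq_or_ne m 0 with rfl | hm
    · simp
    · field_simp
  have hroot0 m : 0 ≤ prodSeq μ (fun M => ‖M‖) p m ^ (1 / ((p : ℝ) * m)) :=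
    Real.rpow_nonneg (hS m) _
  have hbdd := isBoundedUnder_prodSeq_norm_rpow hR hR0 hp0
  rw [pRad_eq_limsup_prodSeq_norm hR hR0 hnrm hp0,
    pRad_eq_limsup_prodSeq_norm (ae_norm_kronPow_le hR k) (pow_nonneg hR0 k) hnrm'
      (by positivity)]
  simp only [prodSeq_map_kronPow_norm μ hk.ne' (p : ℝ), hroot]
  rw [limsup_pow_of_nonneg hroot0 hbdd, one_div,
    Real.pow_rpow_inv_natCast (le_limsup_of_frequently_le (.of_forall hroot0) hbdd) hk.ne']
end

section
/- The deterministic switched linear system x(k+1) = A_k x(k) with A_k ∈ M (a compact set of d×d matrices) is absolutely asymptotically stable (x(k) → 0 for every switching sequence) if and only if the joint spectral radius ρ̂(M) < 1. -/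
/-!
If `ρ̂(M) < β < 1`, then eventually every product of `k` matrices from `M` has `nrm` at most
`β ^ k`; since `nrm` is equivalent to the submultiplicative `L∞` operator norm, the products, and
hence all trajectories, tend to zero. Conversely, if every trajectory tends to zero, then so does
every product `A (k-1) ⋯ A 0`. The open sets `{A | ‖A k ⋯ A 0‖ < 1/2}` cover the compact space
`M^ℕ`, so a single horizon `m` works for every sequence; cutting a product into blocks of length
at most `m` gives `‖A (n-1) ⋯ A 0‖ ≤ K 2^(-n/m)` uniformly, hence `ρ̂(M) ≤ 2^(-1/m) < 1`.
-/

open Matrix Set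

open MeasureTheory Filter

open scoped Topology

section FiniteDimensionalSeminorm

variable {E : Type*} [NormedAddCommGroup E] [NormedSpace ℝ E] [FiniteDimensional ℝ E]

theorem Seminorm.continuous_of_finiteDimensional (p : Seminorm ℝ E) : Continuous p :=
  continuousOn_univ.mp (p.convexOn.continuousOn isOpen_univ)

theorem Seminorm.exists_pos_mul_norm_le (p : Seminorm ℝ E) (hp : ∀ x, p x = 0 → x = 0) :
    ∃ c, 0 < c ∧ ∀ x, c * ‖x‖ ≤ p x := by
  rcases subsingleton_or_nontrivial E with hE | hE
  · exact ⟨1, one_pos, fun x => by simp [Subsingleton.elim x 0]⟩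
  obtain ⟨z, hz, hmin⟩ := (isCompact_sphere (0 : E) 1).exists_isMinOn
    (NormedSpace.sphere_nonempty.mpr zero_le_one) p.continuous_of_finiteDimensional.continuousOn
  have hz0 : z ≠ 0 := ne_zero_of_mem_unit_sphere ⟨z, hz⟩
  refine ⟨p z, (apply_nonneg p z).lt_of_ne' (mt (hp z) hz0), fun x => ?_⟩
  rcases eq_or_ne x 0 with rfl | hx
  · simp
  have hx' : 0 < ‖x‖ := norm_pos_iff.mpr hx
  have hmem : ‖x‖⁻¹ • x ∈ Metric.sphere (0 : E) 1 := by
    rw [mem_sphere_zero_iff_norm, norm_smul, norm_inv, norm_norm, inv_mul_cancel₀ hx'.ne']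
  have hle : p z ≤ ‖x‖⁻¹ * p x := (show p z ≤ p (‖x‖⁻¹ • x) from hmin hmem).trans_eq
    (by rw [map_smul_eq_mul, norm_inv, norm_norm])
  calc p z * ‖x‖ ≤ ‖x‖⁻¹ * p x * ‖x‖ := by gcongr
    _ = p x := by field_simp

end FiniteDimensionalSeminorm

section LeftProd

variable {R : Type*}

/-- `leftProd A k = A (k - 1) * ⋯ * A 1 * A 0`. -/
def leftProd [Monoid R] (A : ℕ → R) (k : ℕ) : R :=
  (List.ofFn fun i : Fin k => A i).reverse.prod

@[simp]
theorem leftProd_zero [Monoid R] (A : ℕ → R) : leftProd A 0 = 1 := rfl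

theorem leftProd_succ [Monoid R] (A : ℕ → R) (k : ℕ) :
    leftProd A (k + 1) = A k * leftProd A k := by
  rw [leftProd, List.ofFn_succ', leftProd]
  simp

theorem leftProd_add [Monoid R] (A : ℕ → R) (j k : ℕ) :
    leftProd A (j + k) = leftProd (fun n => A (n + k)) j * leftProd A k := by
  induction j with
  | zero => simp
  | succ j ih => rw [Nat.add_right_comm, leftProd_succ, ih, leftProd_succ, mul_assoc]

theorem List.ofFn_reverse_prod_eq_leftProd [Monoid R] {k : ℕ} (w : Fin k → R) (b : R) :
    (List.ofFn w).reverse.prod = leftProd (fun n => if h : n < k then w ⟨n, h⟩ else b) k := by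
  simp [leftProd]

theorem continuous_leftProd [Monoid R] [TopologicalSpace R] [ContinuousMul R] (k : ℕ) :
    Continuous fun A : ℕ → R => leftProd A k := by
  induction k with
  | zero => simpa using continuous_const
  | succ k ih =>
    simp only [leftProd_succ]
    exact (continuous_apply k).mul ih

theorem norm_leftProd_le [NormedRing R] {A : ℕ → R} {C : ℝ} (hA : ∀ n, ‖A n‖ ≤ C) (k : ℕ) :
    ‖leftProd A k‖ ≤ ‖(1 : R)‖ * C ^ k := by
  induction k with
  | zero => simp
  | succ k ih =>
    rw [leftProd_succ, pow_succ', mul_left_comm]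
    exact (norm_mul_le _ _).trans
      (mul_le_mul (hA k) ih (norm_nonneg _) ((norm_nonneg _).trans (hA 0)))

end LeftProd

theorem eventually_mul_pow_le_pow (K : ℝ) {γ δ : ℝ} (hγ : 0 ≤ γ) (hγδ : γ < δ) :
    ∀ᶠ n in atTop, K * γ ^ n ≤ δ ^ n := by
  have hδ : 0 < δ := hγ.trans_lt hγδ
  have hlim : Tendsto (fun n => K * (γ / δ) ^ n) atTop (𝓝 0) := by
    simpa using (tendsto_pow_atTop_nhds_zero_of_lt_one (by positivity)
      ((div_lt_one hδ).mpr hγδ)).const_mul K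
  filter_upwards [hlim.eventually_le_const one_pos] with n hn
  calc K * γ ^ n = K * (γ / δ) ^ n * δ ^ n := by
        rw [div_pow, mul_assoc, div_mul_cancel₀ _ (by positivity)]
    _ ≤ 1 * δ ^ n := by gcongr
    _ = δ ^ n := one_mul _

theorem Real.rpow_one_div_le_iff {x y : ℝ} {k : ℕ} (hx : 0 ≤ x) (hy : 0 ≤ y) (hk : k ≠ 0) :
    x ^ (1 / (k : ℝ)) ≤ y ↔ x ≤ y ^ k := by
  rw [one_div, Real.rpow_inv_le_iff_of_pos hx hy (by positivity), Real.rpow_natCast]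

section UniformDecay

variable {R : Type*} [NormedRing R] {M : Set R}

theorem IsCompact.exists_contraction_time (hM : IsCompact M)
    (h : ∀ A : ℕ → R, (∀ n, A n ∈ M) → Tendsto (leftProd A) atTop (𝓝 0)) :
    ∃ m, 0 < m ∧ ∀ A : ℕ → R, (∀ n, A n ∈ M) →
      ∃ j, 0 < j ∧ j ≤ m ∧ ‖leftProd A j‖ < 1 / 2 := by
  let U : ℕ → Set (ℕ → R) := fun j => {A | ‖leftProd A (j + 1)‖ < 1 / 2}
  have hU : ∀ j, IsOpen (U j) := fun j =>
    isOpen_lt (continuous_norm.comp (continuous_leftProd _)) continuous_const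
  have hcover : univ.pi (fun _ => M) ⊆ ⋃ j, U j := by
    intro A hA
    have hlim := tendsto_zero_iff_norm_tendsto_zero.mp (h A fun n => hA n (mem_univ n))
    obtain ⟨N, hN⟩ :=
      eventually_atTop.mp (hlim.eventually_lt_const (by norm_num : (0 : ℝ) < 1 / 2))
    exact mem_iUnion.mpr ⟨N, hN (N + 1) N.le_succ⟩
  obtain ⟨t, ht⟩ := (isCompact_univ_pi fun _ => hM).elim_finite_subcover U hU hcover
  obtain ⟨m, hm⟩ := t.exists_nat_subset_range
  refine ⟨m + 1, m.succ_pos, fun A hA => ?_⟩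
  obtain ⟨j, hjt, hj⟩ := mem_iUnion₂.mp (ht fun n _ => hA n)
  exact ⟨j + 1, j.succ_pos, Nat.succ_le_succ (Finset.mem_range.mp (hm hjt)).le, hj⟩

theorem norm_leftProd_le_mul_pow_of_contraction {K γ : ℝ} (m : ℕ)
    (hinit : ∀ A : ℕ → R, (∀ n, A n ∈ M) → ∀ n < m, ‖leftProd A n‖ ≤ K * γ ^ n)
    (hstep : ∀ A : ℕ → R, (∀ n, A n ∈ M) → ∃ j, 0 < j ∧ j ≤ m ∧ ‖leftProd A j‖ ≤ γ ^ j)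
    (n : ℕ) (A : ℕ → R) (hA : ∀ n, A n ∈ M) : ‖leftProd A n‖ ≤ K * γ ^ n := by
  induction n using Nat.strong_induction_on generalizing A with
  | _ n ih =>
    rcases lt_or_ge n m with hnm | hmn
    · exact hinit A hA n hnm
    obtain ⟨j, hj0, hjm, hj⟩ := hstep A hA
    obtain ⟨i, rfl⟩ : ∃ i, n = i + j := ⟨n - j, by omega⟩
    have hi := ih i (by omega) (fun n => A (n + j)) fun n => hA _
    calc ‖leftProd A (i + j)‖ ≤ ‖leftProd (fun n => A (n + j)) i‖ * ‖leftProd A j‖ := by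
          rw [leftProd_add]; exact norm_mul_le _ _
      _ ≤ K * γ ^ i * γ ^ j := mul_le_mul hi hj (norm_nonneg _) ((norm_nonneg _).trans hi)
      _ = K * γ ^ (i + j) := by ring

theorem IsCompact.exists_norm_leftProd_le_mul_pow (hM : IsCompact M)
    (h : ∀ A : ℕ → R, (∀ n, A n ∈ M) → Tendsto (leftProd A) atTop (𝓝 0)) :
    ∃ K γ : ℝ, 0 ≤ γ ∧ γ < 1 ∧
      ∀ A : ℕ → R, (∀ n, A n ∈ M) → ∀ n, ‖leftProd A n‖ ≤ K * γ ^ n := by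
  obtain ⟨m, hm0, hm⟩ := hM.exists_contraction_time h
  obtain ⟨C, hC⟩ := hM.isBounded.exists_norm_le
  set γ : ℝ := (1 / 2) ^ ((m : ℝ)⁻¹)
  have hγ0 : 0 ≤ γ := by positivity
  have hγ1 : γ < 1 := Real.rpow_lt_one (by norm_num) (by norm_num) (by positivity)
  have hγm : γ ^ m = 1 / 2 := Real.rpow_inv_natCast_pow (by norm_num) hm0.ne'
  have hγ_ge : ∀ {j}, j ≤ m → 1 / 2 ≤ γ ^ j := fun hj =>
    hγm ▸ pow_le_pow_of_le_one hγ0 hγ1.le hj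
  refine ⟨2 * ‖(1 : R)‖ * max C 1 ^ m, γ, hγ0, hγ1, fun A hA n =>
    norm_leftProd_le_mul_pow_of_contraction m (fun A hA n hn => ?_) (fun A hA => ?_) n A hA⟩
  · calc ‖leftProd A n‖ ≤ ‖(1 : R)‖ * max C 1 ^ n :=
          norm_leftProd_le (fun k => (hC _ (hA k)).trans (le_max_left _ _)) n
      _ ≤ ‖(1 : R)‖ * max C 1 ^ m :=
          mul_le_mul_of_nonneg_left (pow_le_pow_right₀ (le_max_right _ _) hn.le) (norm_nonneg _)
      _ ≤ 2 * ‖(1 : R)‖ * max C 1 ^ m * γ ^ n := by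
          have := hγ_ge hn.le
          have : 0 ≤ ‖(1 : R)‖ * max C 1 ^ m := by positivity
          nlinarith
  · obtain ⟨j, hj0, hjm, hj⟩ := hm A hA
    exact ⟨j, hj0, hjm, hj.le.trans (hγ_ge hjm)⟩

theorem eventually_nrm_wordProd_le_pow {nrm : R → ℝ} {b : R} (hb : b ∈ M) {c K γ δ : ℝ}
    (hc : 0 ≤ c) (hnrm : ∀ x, nrm x ≤ c * ‖x‖)
    (hK : ∀ A : ℕ → R, (∀ n, A n ∈ M) → ∀ n, ‖leftProd A n‖ ≤ K * γ ^ n)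
    (hγ : 0 ≤ γ) (hγδ : γ < δ) :
    ∀ᶠ k in atTop, ∀ w : Fin k → R, (∀ i, w i ∈ M) → nrm (List.ofFn w).reverse.prod ≤ δ ^ k := by
  filter_upwards [eventually_mul_pow_le_pow (c * K) hγ hγδ] with k hk w hw
  have hseq : ∀ n, (if h : n < k then w ⟨n, h⟩ else b) ∈ M := fun n => by
    split_ifs
    exacts [hw _, hb]
  rw [List.ofFn_reverse_prod_eq_leftProd w b]
  calc _ ≤ c * ‖leftProd _ k‖ := hnrm _
    _ ≤ c * (K * γ ^ k) := by gcongr; exact hK _ hseq k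
    _ ≤ δ ^ k := by rwa [← mul_assoc]

end UniformDecay

theorem tendsto_zero_of_nrm_le_pow {E : Type*} [SeminormedAddCommGroup E] {nrm : E → ℝ}
    {c β : ℝ} (hc : 0 < c) (hnrm : ∀ x, c * ‖x‖ ≤ nrm x) (hβ0 : 0 ≤ β) (hβ1 : β < 1)
    {u : ℕ → E} (hu : ∀ᶠ k in atTop, nrm (u k) ≤ β ^ k) : Tendsto u atTop (𝓝 0) := by
  refine tendsto_zero_iff_norm_tendsto_zero.mpr (squeeze_zero' (.of_forall fun k => norm_nonneg _)
    ?_ (by simpa using (tendsto_pow_atTop_nhds_zero_of_lt_one hβ0 hβ1).div_const c))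
  filter_upwards [hu] with k hk
  rw [le_div_iff₀' hc]
  exact (hnrm _).trans hk

theorem Matrix.tendsto_zero_of_forall_mulVec {ι m n R : Type*} [Fintype n] [DecidableEq n]
    [NonAssocSemiring R] [TopologicalSpace R] {l : Filter ι} {P : ι → Matrix m n R}
    (h : ∀ x, Tendsto (fun k => P k *ᵥ x) l (𝓝 0)) : Tendsto P l (𝓝 0) :=
  tendsto_pi_nhds.mpr fun i => tendsto_pi_nhds.mpr fun j => by
    simpa [mulVec_single_one] using tendsto_pi_nhds.mp (h (Pi.single j 1)) i

section JointSpectralRadius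

variable {d : ℕ} {Mset : Set (Matrix (Fin d) (Fin d) ℝ)} {nrm : Matrix (Fin d) (Fin d) ℝ → ℝ}

theorem jsr_le_of_eventually_le_pow (hnrm : ∀ M, 0 ≤ nrm M) {δ : ℝ} (hδ : 0 ≤ δ)
    (h : ∀ᶠ k in atTop, ∀ A : Fin k → Matrix (Fin d) (Fin d) ℝ, (∀ i, A i ∈ Mset) →
      nrm (List.ofFn A).reverse.prod ≤ δ ^ k) :
    jsr Mset nrm ≤ δ := by
  refine limsup_le_of_le (isCoboundedUnder_le_of_le atTop fun k => Real.sSup_nonneg ?_) ?_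
  · rintro _ ⟨A, -, rfl⟩
    exact Real.rpow_nonneg (hnrm _) _
  · filter_upwards [h, eventually_ne_atTop 0] with k hk hk0
    refine Real.sSup_le ?_ hδ
    rintro _ ⟨A, hA, rfl⟩
    exact (Real.rpow_one_div_le_iff (hnrm _) hδ hk0).mpr (hk A hA)

theorem eventually_le_pow_of_jsr_lt (hnrm : ∀ M, 0 ≤ nrm M) {D β : ℝ} (hD : 0 ≤ D)
    (hbound : ∀ᶠ k in atTop, ∀ A : Fin k → Matrix (Fin d) (Fin d) ℝ, (∀ i, A i ∈ Mset) →
      nrm (List.ofFn A).reverse.prod ≤ D ^ k)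
    (hβ : 0 ≤ β) (hjsr : jsr Mset nrm < β) :
    ∀ᶠ k in atTop, ∀ A : Fin k → Matrix (Fin d) (Fin d) ℝ, (∀ i, A i ∈ Mset) →
      nrm (List.ofFn A).reverse.prod ≤ β ^ k := by
  have hroots : ∀ᶠ k : ℕ in atTop, ∀ r ∈ {r | ∃ A : Fin k → Matrix (Fin d) (Fin d) ℝ,
      (∀ i, A i ∈ Mset) ∧ r = nrm ((List.ofFn A).reverse.prod) ^ ((1 : ℝ) / k)}, r ≤ D := by
    filter_upwards [hbound, eventually_ne_atTop 0] with k hk hk0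
    rintro _ ⟨A, hA, rfl⟩
    exact (Real.rpow_one_div_le_iff (hnrm _) hD hk0).mpr (hk A hA)
  have hlt := eventually_lt_of_limsup_lt hjsr
    (isBoundedUnder_of_eventually_le (hroots.mono fun k hk => Real.sSup_le hk hD))
  filter_upwards [hlt, hroots, eventually_ne_atTop 0] with k hlt hroots hk0 A hA
  rw [← Real.rpow_one_div_le_iff (hnrm _) hβ hk0]
  exact (le_csSup ⟨D, hroots⟩ ⟨A, hA, rfl⟩).trans hlt.le

end JointSpectralRadius

def IsMatNorm.toSeminorm {d : ℕ} {nrm : Matrix (Fin d) (Fin d) ℝ → ℝ} (h : IsMatNorm nrm) :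
    Seminorm ℝ (Matrix (Fin d) (Fin d) ℝ) :=
  Seminorm.of nrm h.2.2.2 fun c M => by rw [h.2.2.1, Real.norm_eq_abs]

attribute [local instance] Matrix.linftyOpNormedRing Matrix.linftyOpNormedSpace

theorem IsMatNorm.exists_pos_mul_norm_le {d : ℕ} {nrm : Matrix (Fin d) (Fin d) ℝ → ℝ}
    (h : IsMatNorm nrm) : ∃ c, 0 < c ∧ ∀ M, c * ‖M‖ ≤ nrm M :=
  h.toSeminorm.exists_pos_mul_norm_le fun M => (h.2.1 M).mp

theorem IsMatNorm.exists_le_mul_norm {d : ℕ} {nrm : Matrix (Fin d) (Fin d) ℝ → ℝ}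
    (h : IsMatNorm nrm) : ∃ c, 0 < c ∧ ∀ M, nrm M ≤ c * ‖M‖ :=
  h.toSeminorm.bound_of_continuous_normedSpace h.toSeminorm.continuous_of_finiteDimensional

/-- The deterministic switched system `x(k+1) = A_k x(k)`, `A_k ∈ Mset`, is
absolutely asymptotically stable iff `ρ̂(Mset) < 1`. -/
theorem stmt_14 {d : ℕ} (Mset : Set (Matrix (Fin d) (Fin d) ℝ)) (hne : Mset.Nonempty)
    (hcomp : IsCompact Mset)
    (nrm : Matrix (Fin d) (Fin d) ℝ → ℝ) (hnrm : IsMatNorm nrm) :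
    (∀ A : ℕ → Matrix (Fin d) (Fin d) ℝ, (∀ k, A k ∈ Mset) → ∀ x0 : Fin d → ℝ,
      Tendsto (fun k : ℕ => ((List.ofFn fun i : Fin k => A i).reverse.prod).mulVec x0)
        atTop (nhds 0)) ↔
    jsr Mset nrm < 1 := by
  obtain ⟨b, hb⟩ := hne
  obtain ⟨c₁, hc₁, hlow⟩ := hnrm.exists_pos_mul_norm_le
  obtain ⟨c₂, hc₂, hup⟩ := hnrm.exists_le_mul_norm
  constructor
  · intro hstab
    obtain ⟨K, γ, hγ0, hγ1, hK⟩ := hcomp.exists_norm_leftProd_le_mul_pow fun A hA =>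
      Matrix.tendsto_zero_of_forall_mulVec (hstab A hA)
    have hγδ : γ < (γ + 1) / 2 := by linarith
    exact (jsr_le_of_eventually_le_pow hnrm.1 (by positivity)
      (eventually_nrm_wordProd_le_pow hb hc₂.le hup hK hγ0 hγδ)).trans_lt (by linarith)
  · intro hjsr A hA x0
    obtain ⟨C, hC⟩ := hcomp.isBounded.exists_norm_le
    have hC0 : 0 ≤ C := (norm_nonneg b).trans (hC b hb)
    have hgrowth := eventually_nrm_wordProd_le_pow hb hc₂.le hup
      (fun A hA => norm_leftProd_le fun n => hC _ (hA n)) hC0 (lt_add_one C)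
    obtain ⟨β, hβ, hβ1⟩ := exists_between (max_lt hjsr one_pos)
    have hdecay := eventually_le_pow_of_jsr_lt hnrm.1 (by positivity) hgrowth
      ((le_max_right _ _).trans hβ.le) ((le_max_left _ _).trans_lt hβ)
    have hP : Tendsto (leftProd A) atTop (𝓝 0) :=
      tendsto_zero_of_nrm_le_pow hc₁ hlow ((le_max_right _ _).trans hβ.le) hβ1
        (hdecay.mono fun k hk => hk _ fun i => hA i)
    have hmulVec : Continuous fun M : Matrix (Fin d) (Fin d) ℝ => M *ᵥ x0 :=
      continuous_id.matrix_mulVec continuous_const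
    simpa [Function.comp_def, leftProd] using (hmulVec.tendsto 0).comp hP
end
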